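/- arXiv:1509.05928 — 5 statements merged into one kernel-verified Lean document; each statement's English description precedes it below -/
import Mathlib

section
/- Let n ≥ 1, σ > 0, α > 0 and 1 ≤ q < ∞. There exist constants C₁, C₂ > 0, depending only on n, σ, α, q, such that for every measurable g : ℝⁿ → ℂ one has (with both sides valued in [0,+∞]): C₁ · Σ_{j∈ℤ} (2^{−2jσ} a_j(g))^q ≤ ∫₀^∞ t^{qσ/α} (∫_{ℝⁿ} e^{−2t|ξ|^{2α}} |g(ξ)|² dξ)^{q/2} dt/t ≤ C₂ · Σ_{j∈ℤ} (2^{−2jσ} a_j(g))^q. (This is the p = 2 case of the characterization of the homogeneous Besov space Ḃ^{−2σ}_{2,q} through the semigroup e^{t𝓛} generated by a diagonalizable pseudo-differential operator 𝓛 with homogeneous symbol of order 2α: the norm ‖f‖_{Ḃ^{−2σ}_{2,q}} is equivalent to ‖ t^{σ/α}‖e^{t𝓛}f‖₂ ‖_{L^q(ℝ⁺, dt/t)}.) -/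
open MeasureTheory Filter Topology
open scoped ENNReal NNReal

noncomputable section

/-- The quantity `ρ^{-(2r+n)} ∫_{|ξ|≤ρ} |g(ξ)|² dξ`, valued in `[0,∞]`. -/
def decayFun (n : ℕ) (g : EuclideanSpace ℝ (Fin n) → ℂ) (r ρ : ℝ) : ℝ≥0∞ :=
  ENNReal.ofReal (ρ ^ (-(2 * r + (n : ℝ)))) *
    ∫⁻ ξ in {ξ : EuclideanSpace ℝ (Fin n) | ‖ξ‖ ≤ ρ}, ENNReal.ofReal (‖g ξ‖ ^ 2)

/-- Lower decay indicator `P_r(g)₋`. -/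
def Pminus (n : ℕ) (g : EuclideanSpace ℝ (Fin n) → ℂ) (r : ℝ) : ℝ≥0∞ :=
  liminf (fun ρ : ℝ => decayFun n g r ρ) (𝓝[>] (0 : ℝ))

/-- Upper decay indicator `P_r(g)₊`. -/
def Pplus (n : ℕ) (g : EuclideanSpace ℝ (Fin n) → ℂ) (r : ℝ) : ℝ≥0∞ :=
  limsup (fun ρ : ℝ => decayFun n g r ρ) (𝓝[>] (0 : ℝ))

/-- `E_α(t) = ∫_{ℝⁿ} e^{−2t|ξ|^{2α}} |g(ξ)|² dξ`, valued in `[0,∞]`. -/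
def Ealpha (n : ℕ) (g : EuclideanSpace ℝ (Fin n) → ℂ) (α t : ℝ) : ℝ≥0∞ :=
  ∫⁻ ξ : EuclideanSpace ℝ (Fin n),
    ENNReal.ofReal (Real.exp (-(2 * t) * ‖ξ‖ ^ (2 * α)) * ‖g ξ‖ ^ 2)

/-- Sharp Littlewood–Paley block: `a_j(g) = (∫_{2^j ≤ |ξ| < 2^{j+1}} |g(ξ)|² dξ)^{1/2}`. -/
def ajBlock (n : ℕ) (g : EuclideanSpace ℝ (Fin n) → ℂ) (j : ℤ) : ℝ≥0∞ :=
  (∫⁻ ξ in {ξ : EuclideanSpace ℝ (Fin n) |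
      (2 : ℝ) ^ (j : ℝ) ≤ ‖ξ‖ ∧ ‖ξ‖ < (2 : ℝ) ^ ((j : ℝ) + 1)},
    ENNReal.ofReal (‖g ξ‖ ^ 2)) ^ (1 / 2 : ℝ)

/-- The strong A-condition with exponent `σ`: the Fourier-side description of `Ȧ^{-σ}_{2,∞}`. -/
def StrongACond (n : ℕ) (g : EuclideanSpace ℝ (Fin n) → ℂ) (σ : ℝ) : Prop :=
  ∃ c C : ℝ, 0 < c ∧ 0 < C ∧ ∃ M : ℕ, 0 < M ∧
    (∀ j : ℤ, ajBlock n g j ≤ ENNReal.ofReal (C * (2 : ℝ) ^ (σ * (j : ℝ)))) ∧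
    (∀ j₀ : ℤ, ∃ j : ℤ, j₀ ≤ j ∧ j < j₀ + M ∧
      ENNReal.ofReal (c * (2 : ℝ) ^ (σ * (j : ℝ))) ≤ ajBlock n g j)

/-- The weak A-condition with exponent `σ`: the Fourier-side description of `𝒜^{-σ}_{2,∞}`. -/
def WeakACond (n : ℕ) (g : EuclideanSpace ℝ (Fin n) → ℂ) (σ : ℝ) : Prop :=
  ∃ c C : ℝ, 0 < c ∧ 0 < C ∧ ∃ jk : ℕ → ℤ,
    Filter.Tendsto jk Filter.atTop Filter.atBot ∧
    (∃ M : ℕ, ∀ k : ℕ, |jk k - jk (k + 1)| ≤ M) ∧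
    (∀ j : ℤ, ajBlock n g j ≤ ENNReal.ofReal (C * (2 : ℝ) ^ (σ * (j : ℝ)))) ∧
    (∀ k : ℕ, ENNReal.ofReal (c * (2 : ℝ) ^ (σ * (jk k : ℝ))) ≤ ajBlock n g (jk k))

/-!
Push the measure `|g(ξ)|² dξ` forward under the symbol `ξ ↦ |ξ|^{2α}` to a measure `ν` on
`(0, ∞)` (the origin is Lebesgue-null). Then `E_α(t)` is the Laplace transform of `ν` at `2t`,
and with `b = 2^{2α}` the block `a_j(g)²` is `ν [b^j, b^{j+1})`, while `2^{-2jσ} = (b^j)^{-σ/α}`.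
Cut the time axis into the intervals `(b^n, b^{n+1}]`, on which `t^{qσ/α}` is comparable to
`(b^n)^{qσ/α}`.

On `(b^{-1-j}, b^{-j}]` the factor `e^{-2t|ξ|^{2α}}` is at least `e^{-2b}` on the `j`-th block,
which gives the lower bound one block at a time. Conversely `E_α(b^n) ≤ ∑_j e^{-2 b^{n+j}} a_j²`,
and after weighting this is a discrete convolution with a kernel decaying at least geometrically
in both directions. The convolution is bounded on `ℓ^{q/2}` by Young's inequality when `q ≥ 2`
and by the subadditivity of `x ↦ x^{q/2}` when `q ≤ 2`.
-/

open Set Real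
open scoped Nat

theorem rpow_mul_exp_neg_le_inv {x a c : ℝ} {N : ℕ} (hx : 1 ≤ x) (hc : 0 < c)
    (hN : a + 1 ≤ N) : x ^ a * exp (-(c * x)) ≤ N ! / c ^ N * x⁻¹ := by
  have hx0 : 0 < x := by linarith
  have hpow : x ^ a ≤ x ^ N * x⁻¹ := by
    rw [← rpow_natCast, ← rpow_neg_one, ← rpow_add hx0]
    exact rpow_le_rpow_of_exponent_le hx (by linarith)
  have hexp : exp (-(c * x)) ≤ N ! / (c * x) ^ N := by
    rw [exp_neg, inv_le_comm₀ (exp_pos _) (by positivity), inv_div]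
    exact pow_div_factorial_le_exp _ (by positivity) N
  calc x ^ a * exp (-(c * x)) ≤ x ^ N * x⁻¹ * (N ! / (c * x) ^ N) := by gcongr
    _ = N ! / c ^ N * x⁻¹ := by field_simp; ring

theorem summable_zpow_rpow_mul_exp_neg {b a c : ℝ} (hb : 1 < b) (ha : 0 < a) (hc : 0 < c) :
    Summable fun m : ℤ => (b ^ m) ^ a * exp (-(c * b ^ m)) := by
  have hb0 : 0 < b := by linarith
  apply Summable.of_nat_of_neg
  · obtain ⟨N, hN⟩ : ∃ N : ℕ, a + 1 ≤ N := ⟨⌈a + 1⌉₊, Nat.le_ceil _⟩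
    refine Summable.of_nonneg_of_le (fun m => by positivity) (fun m => ?_)
      ((summable_geometric_of_lt_one (by positivity) (inv_lt_one_of_one_lt₀ hb)).mul_left
        (N ! / c ^ N))
    simpa only [zpow_natCast, inv_pow] using rpow_mul_exp_neg_le_inv (one_le_pow₀ hb.le) hc hN
  · refine Summable.of_nonneg_of_le (fun m => by positivity) (fun m => ?_)
      (summable_geometric_of_lt_one (by positivity) (inv_lt_one_of_one_lt₀ (one_lt_rpow hb ha)))
    calc (b ^ (-(m : ℤ))) ^ a * exp (-(c * b ^ (-(m : ℤ)))) ≤ (b ^ (-(m : ℤ))) ^ a * 1 := by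
          gcongr
          exact exp_le_one_iff.2 (neg_nonpos.2 (by positivity))
      _ = (b ^ a)⁻¹ ^ m := by
          rw [mul_one, zpow_neg, zpow_natCast, inv_rpow (by positivity), inv_pow,
            ← rpow_pow_comm hb0.le]

namespace ENNReal

theorem rpow_tsum_le_tsum_rpow {ι : Type*} (f : ι → ℝ≥0∞) {p : ℝ} (hp : 0 < p) (hp1 : p ≤ 1) :
    (∑' i, f i) ^ p ≤ ∑' i, f i ^ p := by
  classical
  have hfin (s : Finset ι) : (∑ i ∈ s, f i) ^ p ≤ ∑ i ∈ s, f i ^ p := by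
    induction s using Finset.induction with
    | empty => simp [hp]
    | insert a s ha ih =>
      rw [Finset.sum_insert ha, Finset.sum_insert ha]
      exact (rpow_add_le_add_rpow _ _ hp.le hp1).trans (by gcongr)
  rw [ENNReal.tsum_eq_iSup_sum, ← orderIsoRpow_apply p hp, (orderIsoRpow p hp).map_iSup]
  exact iSup_le fun s => (hfin s).trans (ENNReal.sum_le_tsum s)

theorem rpow_tsum_mul_le {ι : Type*} {p : ℝ} (hp : 1 ≤ p) (w f : ι → ℝ≥0∞) :
    (∑' i, w i * f i) ^ p ≤ (∑' i, w i) ^ (p - 1) * ∑' i, w i * f i ^ p := by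
  have hp0 : 0 < p := by linarith
  have holder :
      ∑' i, w i * f i ≤ (∑' i, w i) ^ (1 - p⁻¹) * (∑' i, w i * f i ^ p) ^ p⁻¹ := by
    have : 0 ≤ 1 - p⁻¹ := sub_nonneg.2 (inv_le_one_of_one_le₀ hp)
    rw [ENNReal.tsum_eq_iSup_sum]
    refine iSup_le fun s => (inner_le_weight_mul_Lp_of_nonneg s hp w f).trans ?_
    gcongr <;> exact ENNReal.sum_le_tsum s
  calc (∑' i, w i * f i) ^ p
      ≤ ((∑' i, w i) ^ (1 - p⁻¹) * (∑' i, w i * f i ^ p) ^ p⁻¹) ^ p := by gcongr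
    _ = (∑' i, w i) ^ (p - 1) * ∑' i, w i * f i ^ p := by
      rw [mul_rpow_of_nonneg _ _ hp0.le, ← rpow_mul, ← rpow_mul, inv_mul_cancel₀ hp0.ne',
        rpow_one, sub_mul, one_mul, inv_mul_cancel₀ hp0.ne']

end ENNReal

theorem tsum_rpow_tsum_add_mul_le_of_le_one {p : ℝ} (hp : 0 < p) (hp1 : p ≤ 1)
    (w B : ℤ → ℝ≥0∞) :
    ∑' n, (∑' j, w (n + j) * B j) ^ p ≤ (∑' m, w m ^ p) * ∑' j, B j ^ p := by
  have hshift (j : ℤ) : ∑' n, w (n + j) ^ p = ∑' m, w m ^ p :=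
    (Equiv.addRight j).tsum_eq fun m => w m ^ p
  calc ∑' n, (∑' j, w (n + j) * B j) ^ p ≤ ∑' n, ∑' j, w (n + j) ^ p * B j ^ p := by
        refine ENNReal.tsum_le_tsum fun n => ?_
        simp_rw [← ENNReal.mul_rpow_of_nonneg _ _ hp.le]
        exact ENNReal.rpow_tsum_le_tsum_rpow _ hp hp1
    _ = (∑' m, w m ^ p) * ∑' j, B j ^ p := by
        rw [ENNReal.tsum_comm, ← ENNReal.tsum_mul_left]
        simp_rw [ENNReal.tsum_mul_right, hshift]

theorem tsum_rpow_tsum_add_mul_le_of_one_le {p : ℝ} (hp : 1 ≤ p) (w B : ℤ → ℝ≥0∞) :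
    ∑' n, (∑' j, w (n + j) * B j) ^ p ≤ (∑' m, w m) ^ p * ∑' j, B j ^ p := by
  have hshift (j : ℤ) : ∑' n, w (n + j) = ∑' m, w m := (Equiv.addRight j).tsum_eq w
  have hshift' (n : ℤ) : ∑' j, w (n + j) = ∑' m, w m := (Equiv.addLeft n).tsum_eq w
  calc ∑' n, (∑' j, w (n + j) * B j) ^ p
      ≤ ∑' n, (∑' j, w (n + j)) ^ (p - 1) * ∑' j, w (n + j) * B j ^ p :=
        ENNReal.tsum_le_tsum fun n => ENNReal.rpow_tsum_mul_le hp _ _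
    _ = (∑' m, w m) ^ (p - 1) * ((∑' m, w m) * ∑' j, B j ^ p) := by
        simp_rw [hshift', ENNReal.tsum_mul_left]
        rw [ENNReal.tsum_comm]
        simp_rw [ENNReal.tsum_mul_right, hshift, ENNReal.tsum_mul_left]
    _ = (∑' m, w m) ^ p * ∑' j, B j ^ p := by
        rw [← mul_assoc]
        congr 1
        simpa using (ENNReal.rpow_add_of_nonneg (x := ∑' m, w m) (p - 1) 1
          (sub_nonneg.2 hp) zero_le_one).symm

theorem tsum_rpow_tsum_add_mul_le {p : ℝ} (hp : 0 < p) (w B : ℤ → ℝ≥0∞) :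
    ∑' n, (∑' j, w (n + j) * B j) ^ p ≤ (∑' m, w m ^ p + (∑' m, w m) ^ p) * ∑' j, B j ^ p := by
  rcases le_total p 1 with hp1 | hp1
  · exact (tsum_rpow_tsum_add_mul_le_of_le_one hp hp1 w B).trans (by gcongr; exact le_self_add)
  · exact (tsum_rpow_tsum_add_mul_le_of_one_le hp1 w B).trans (by gcongr; exact le_add_self)

theorem setLIntegral_Ioi_eq_tsum_Ico_zpow {b : ℝ} (hb : 1 < b) (μ : Measure ℝ)
    (f : ℝ → ℝ≥0∞) :
    ∫⁻ r in Ioi 0, f r ∂μ = ∑' j : ℤ, ∫⁻ r in Ico (b ^ j) (b ^ (j + 1)), f r ∂μ := by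
  have hcover : ⋃ j : ℤ, Ico (b ^ j) (b ^ (j + 1)) = Ioi 0 := by
    ext x
    simp only [mem_iUnion, mem_Ioi]
    exact ⟨fun ⟨j, hj⟩ => (zpow_pos (by linarith) j).trans_le hj.1,
      fun hx => exists_mem_Ico_zpow hx hb⟩
  rw [← hcover, lintegral_iUnion (fun _ => measurableSet_Ico)
    (by simpa only [Order.succ_eq_add_one] using
      (zpow_right_mono₀ hb.le).pairwise_disjoint_on_Ico_succ)]

theorem setLIntegral_Ioi_eq_tsum_Ioc_zpow {b : ℝ} (hb : 1 < b) (μ : Measure ℝ)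
    (f : ℝ → ℝ≥0∞) :
    ∫⁻ t in Ioi 0, f t ∂μ = ∑' n : ℤ, ∫⁻ t in Ioc (b ^ n) (b ^ (n + 1)), f t ∂μ := by
  have hcover : ⋃ n : ℤ, Ioc (b ^ n) (b ^ (n + 1)) = Ioi 0 := by
    ext x
    simp only [mem_iUnion, mem_Ioi]
    exact ⟨fun ⟨n, hn⟩ => (zpow_pos (by linarith) n).trans hn.1,
      fun hx => exists_mem_Ioc_zpow hx hb⟩
  rw [← hcover, lintegral_iUnion (fun _ => measurableSet_Ioc)
    (by simpa only [Order.succ_eq_add_one] using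
      (zpow_right_mono₀ hb.le).pairwise_disjoint_on_Ioc_succ)]

theorem le_setLIntegral_Ioc_zpow {b s : ℝ} (hb : 1 < b) (hs : 0 ≤ s) (n : ℤ) {f : ℝ → ℝ≥0∞}
    {M : ℝ≥0∞} (hf : ∀ t ∈ Ioc (b ^ n) (b ^ (n + 1)), M ≤ f t) :
    ENNReal.ofReal ((1 - b⁻¹) * (b ^ n) ^ s) * M ≤
      ∫⁻ t in Ioc (b ^ n) (b ^ (n + 1)), ENNReal.ofReal (t ^ s) * f t * ENNReal.ofReal t⁻¹ := by
  have hb0 : 0 < b := by linarith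
  have hx : 0 < b ^ n := zpow_pos hb0 n
  have hsucc : b ^ (n + 1) = b ^ n * b := zpow_add_one₀ hb0.ne' n
  calc ENNReal.ofReal ((1 - b⁻¹) * (b ^ n) ^ s) * M
      = ENNReal.ofReal ((b ^ n) ^ s) * M * ENNReal.ofReal (b ^ (n + 1))⁻¹ *
          volume (Ioc (b ^ n) (b ^ (n + 1))) := by
        have : (1 - b⁻¹) * (b ^ n) ^ s =
            (b ^ n) ^ s * ((b ^ (n + 1))⁻¹ * (b ^ (n + 1) - b ^ n)) := by
          rw [hsucc]; field_simp
        rw [Real.volume_Ioc, this, ENNReal.ofReal_mul (by positivity),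
          ENNReal.ofReal_mul (by positivity)]
        ring
    _ = ∫⁻ _ in Ioc (b ^ n) (b ^ (n + 1)),
          ENNReal.ofReal ((b ^ n) ^ s) * M * ENNReal.ofReal (b ^ (n + 1))⁻¹ :=
        (setLIntegral_const _ _).symm
    _ ≤ _ := setLIntegral_mono' measurableSet_Ioc fun t ht => by
        have ht0 : 0 < t := hx.trans ht.1
        gcongr
        exacts [ht.1.le, hf t ht, ht.2]

theorem setLIntegral_Ioc_zpow_le {b s : ℝ} (hb : 1 < b) (hs : 0 ≤ s) (n : ℤ) {f : ℝ → ℝ≥0∞}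
    {M : ℝ≥0∞} (hf : ∀ t ∈ Ioc (b ^ n) (b ^ (n + 1)), f t ≤ M) :
    ∫⁻ t in Ioc (b ^ n) (b ^ (n + 1)), ENNReal.ofReal (t ^ s) * f t * ENNReal.ofReal t⁻¹ ≤
      ENNReal.ofReal (b ^ (s + 1) * (b ^ n) ^ s) * M := by
  have hb0 : 0 < b := by linarith
  have hx : 0 < b ^ n := zpow_pos hb0 n
  have hsucc : b ^ (n + 1) = b ^ n * b := zpow_add_one₀ hb0.ne' n
  calc ∫⁻ t in Ioc (b ^ n) (b ^ (n + 1)), ENNReal.ofReal (t ^ s) * f t * ENNReal.ofReal t⁻¹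
      ≤ ∫⁻ _ in Ioc (b ^ n) (b ^ (n + 1)),
          ENNReal.ofReal ((b ^ (n + 1)) ^ s) * M * ENNReal.ofReal (b ^ n)⁻¹ :=
        setLIntegral_mono' measurableSet_Ioc fun t ht => by
          have ht0 : 0 < t := hx.trans ht.1
          gcongr
          exacts [ht.2, hf t ht, ht.1.le]
    _ = ENNReal.ofReal ((b ^ (n + 1)) ^ s) * M * ENNReal.ofReal (b ^ n)⁻¹ *
          ENNReal.ofReal (b ^ (n + 1) - b ^ n) := by
        rw [setLIntegral_const, Real.volume_Ioc]
    _ ≤ ENNReal.ofReal ((b ^ (n + 1)) ^ s) * M * ENNReal.ofReal (b ^ n)⁻¹ *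
          ENNReal.ofReal (b ^ (n + 1)) := by
        gcongr; linarith
    _ = ENNReal.ofReal (b ^ (s + 1) * (b ^ n) ^ s) * M := by
        have : b ^ (s + 1) * (b ^ n) ^ s = (b ^ (n + 1)) ^ s * ((b ^ n)⁻¹ * b ^ (n + 1)) := by
          rw [hsucc, mul_rpow hx.le hb0.le, rpow_add_one hb0.ne']; field_simp
        rw [this, ENNReal.ofReal_mul (by positivity), ENNReal.ofReal_mul (by positivity)]
        ring

def laplaceTransform (ν : Measure ℝ) (t : ℝ) : ℝ≥0∞ :=
  ∫⁻ r, ENNReal.ofReal (exp (-(t * r))) ∂ν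

theorem ofReal_exp_mul_measure_Iio_le_laplaceTransform (ν : Measure ℝ) {t b : ℝ} (ht : 0 ≤ t) :
    ENNReal.ofReal (exp (-(t * b))) * ν (Iio b) ≤ laplaceTransform ν t :=
  calc ENNReal.ofReal (exp (-(t * b))) * ν (Iio b)
      = ∫⁻ _ in Iio b, ENNReal.ofReal (exp (-(t * b))) ∂ν := (setLIntegral_const _ _).symm
    _ ≤ ∫⁻ r in Iio b, ENNReal.ofReal (exp (-(t * r))) ∂ν :=
      setLIntegral_mono' measurableSet_Iio fun r (hr : r < b) =>
        ENNReal.ofReal_le_ofReal (exp_le_exp.2 (by nlinarith))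
    _ ≤ laplaceTransform ν t := setLIntegral_le_lintegral _ _

theorem laplaceTransform_le_tsum {ν : Measure ℝ} (hν : ν (Iic 0) = 0) {b t : ℝ} (hb : 1 < b)
    (ht : 0 ≤ t) :
    laplaceTransform ν t ≤
      ∑' j : ℤ, ENNReal.ofReal (exp (-(t * b ^ j))) * ν (Ico (b ^ j) (b ^ (j + 1))) := by
  have hpos : ν.restrict (Ioi 0) = ν :=
    Measure.restrict_eq_self_of_ae_mem (mem_ae_iff.2 (by simpa only [ofPred_mem_eq, compl_Ioi]))
  calc laplaceTransform ν t = ∫⁻ r in Ioi 0, ENNReal.ofReal (exp (-(t * r))) ∂ν := by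
        rw [hpos, laplaceTransform]
    _ = ∑' j : ℤ, ∫⁻ r in Ico (b ^ j) (b ^ (j + 1)), ENNReal.ofReal (exp (-(t * r))) ∂ν :=
        setLIntegral_Ioi_eq_tsum_Ico_zpow hb _ _
    _ ≤ _ := ENNReal.tsum_le_tsum fun j =>
        (setLIntegral_mono' measurableSet_Ico fun r (hr : _ ∧ _) =>
          ENNReal.ofReal_le_ofReal (exp_le_exp.2 (by nlinarith))).trans_eq
        (setLIntegral_const _ _)

theorem le_setLIntegral_Ioc_zpow_laplaceTransform (ν : Measure ℝ) {b c s p : ℝ} (hb : 1 < b)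
    (hc : 0 ≤ c) (hs : 0 ≤ s) (hp : 0 ≤ p) (j : ℤ) :
    ENNReal.ofReal ((1 - b⁻¹) * b ^ (-s) * exp (-(c * b)) ^ p) *
        (ENNReal.ofReal ((b ^ j) ^ (-s)) * ν (Ico (b ^ j) (b ^ (j + 1))) ^ p) ≤
      ∫⁻ t in Ioc (b ^ (-1 - j)) (b ^ (-1 - j + 1)),
        ENNReal.ofReal (t ^ s) * laplaceTransform ν (c * t) ^ p * ENNReal.ofReal t⁻¹ := by
  have hb0 : 0 < b := by linarith
  have hgap : 0 < 1 - b⁻¹ := sub_pos.2 (inv_lt_one_of_one_lt₀ hb)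
  have hlap : ∀ t ∈ Ioc (b ^ (-1 - j)) (b ^ (-1 - j + 1)),
      (ENNReal.ofReal (exp (-(c * b))) * ν (Ico (b ^ j) (b ^ (j + 1)))) ^ p ≤
        laplaceTransform ν (c * t) ^ p := by
    intro t ⟨htl, ht⟩
    have ht0 : 0 < t := (zpow_pos hb0 _).trans htl
    have hscale : t * b ^ (j + 1) ≤ b :=
      calc t * b ^ (j + 1) ≤ b ^ (-1 - j + 1) * b ^ (j + 1) := by gcongr
        _ = b := by rw [← zpow_add₀ hb0.ne', show -1 - j + 1 + (j + 1) = 1 by ring, zpow_one]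
    gcongr
    refine le_trans ?_
      (ofReal_exp_mul_measure_Iio_le_laplaceTransform ν (b := b ^ (j + 1)) (by positivity))
    exact mul_le_mul' (ENNReal.ofReal_le_ofReal (exp_le_exp.2 (by nlinarith)))
      (measure_mono Ico_subset_Iio_self)
  refine le_of_eq_of_le ?_ (le_setLIntegral_Ioc_zpow hb hs _ hlap)
  have hweight : (b ^ (-1 - j)) ^ s = b ^ (-s) * (b ^ j) ^ (-s) := by
    rw [zpow_sub₀ hb0.ne', zpow_neg_one, div_eq_mul_inv, mul_rpow (by positivity) (by positivity),
      inv_rpow hb0.le, inv_rpow (by positivity), rpow_neg hb0.le, rpow_neg (by positivity)]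
  rw [ENNReal.mul_rpow_of_nonneg _ _ hp, ENNReal.ofReal_rpow_of_nonneg (exp_pos _).le hp,
    ← mul_assoc, ← mul_assoc, ← ENNReal.ofReal_mul (by positivity),
    ← ENNReal.ofReal_mul (by positivity), hweight]
  ring_nf

theorem exists_tsum_blocks_le_lintegral_laplaceTransform {b c s p : ℝ} (hb : 1 < b) (hc : 0 ≤ c)
    (hs : 0 ≤ s) (hp : 0 ≤ p) :
    ∃ C : ℝ, 0 < C ∧ ∀ ν : Measure ℝ,
      ENNReal.ofReal C *
          ∑' j : ℤ, ENNReal.ofReal ((b ^ j) ^ (-s)) * ν (Ico (b ^ j) (b ^ (j + 1))) ^ p ≤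
        ∫⁻ t in Ioi 0,
          ENNReal.ofReal (t ^ s) * laplaceTransform ν (c * t) ^ p * ENNReal.ofReal t⁻¹ := by
  have hgap : 0 < 1 - b⁻¹ := sub_pos.2 (inv_lt_one_of_one_lt₀ hb)
  refine ⟨(1 - b⁻¹) * b ^ (-s) * exp (-(c * b)) ^ p, by positivity, fun ν => ?_⟩
  set F : ℝ → ℝ≥0∞ := fun t =>
    ENNReal.ofReal (t ^ s) * laplaceTransform ν (c * t) ^ p * ENNReal.ofReal t⁻¹
  calc ENNReal.ofReal ((1 - b⁻¹) * b ^ (-s) * exp (-(c * b)) ^ p) *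
        ∑' j : ℤ, ENNReal.ofReal ((b ^ j) ^ (-s)) * ν (Ico (b ^ j) (b ^ (j + 1))) ^ p
      ≤ ∑' j : ℤ, ∫⁻ t in Ioc (b ^ (-1 - j)) (b ^ (-1 - j + 1)), F t := by
        rw [← ENNReal.tsum_mul_left]
        exact ENNReal.tsum_le_tsum
          (le_setLIntegral_Ioc_zpow_laplaceTransform ν hb hc hs hp)
    _ = ∑' n : ℤ, ∫⁻ t in Ioc (b ^ n) (b ^ (n + 1)), F t :=
        (Equiv.subLeft (-1)).tsum_eq fun n => ∫⁻ t in Ioc (b ^ n) (b ^ (n + 1)), F t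
    _ = ∫⁻ t in Ioi 0, F t := (setLIntegral_Ioi_eq_tsum_Ioc_zpow hb _ _).symm

theorem setLIntegral_Ioc_zpow_laplaceTransform_le {ν : Measure ℝ} (hν : ν (Iic 0) = 0)
    {b c s p : ℝ} (hb : 1 < b) (hc : 0 ≤ c) (hs : 0 ≤ s) (hp : 0 < p) (n : ℤ) :
    ∫⁻ t in Ioc (b ^ n) (b ^ (n + 1)),
        ENNReal.ofReal (t ^ s) * laplaceTransform ν (c * t) ^ p * ENNReal.ofReal t⁻¹ ≤
      ENNReal.ofReal (b ^ (s + 1)) *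
        (∑' j : ℤ, ENNReal.ofReal ((b ^ (n + j)) ^ (s / p) * exp (-(c * b ^ (n + j)))) *
          (ENNReal.ofReal ((b ^ j) ^ (-(s / p))) * ν (Ico (b ^ j) (b ^ (j + 1))))) ^ p := by
  have hb0 : 0 < b := by linarith
  refine (setLIntegral_Ioc_zpow_le hb hs n (M := (∑' j : ℤ,
    ENNReal.ofReal (exp (-(c * b ^ n * b ^ j))) * ν (Ico (b ^ j) (b ^ (j + 1)))) ^ p)
    fun t ht => ?_).trans_eq ?_
  · have ht0 : 0 < t := (zpow_pos hb0 n).trans ht.1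
    gcongr
    refine (laplaceTransform_le_tsum hν hb (by positivity)).trans
      (ENNReal.tsum_le_tsum fun j => ?_)
    gcongr
    exact ht.1.le
  have hpow : (b ^ n) ^ s = ((b ^ n) ^ (s / p)) ^ p := by
    rw [← rpow_mul (by positivity), div_mul_cancel₀ _ hp.ne']
  rw [ENNReal.ofReal_mul (by positivity), mul_assoc, hpow,
    ← ENNReal.ofReal_rpow_of_nonneg (by positivity) hp.le,
    ← ENNReal.mul_rpow_of_nonneg _ _ hp.le, ← ENNReal.tsum_mul_left]
  congr 2
  refine tsum_congr fun j => ?_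
  have hkernel : (b ^ n) ^ (s / p) * exp (-(c * b ^ n * b ^ j)) =
      (b ^ (n + j)) ^ (s / p) * exp (-(c * b ^ (n + j))) * (b ^ j) ^ (-(s / p)) := by
    rw [zpow_add₀ hb0.ne', mul_rpow (by positivity) (by positivity), rpow_neg (by positivity)]
    field_simp
  rw [← mul_assoc, ← ENNReal.ofReal_mul (by positivity), ← mul_assoc,
    ← ENNReal.ofReal_mul (by positivity), hkernel]

theorem exists_lintegral_laplaceTransform_le_tsum_blocks {b c s p : ℝ} (hb : 1 < b) (hc : 0 < c)
    (hs : 0 < s) (hp : 0 < p) :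
    ∃ C : ℝ, 0 < C ∧ ∀ ν : Measure ℝ, ν (Iic 0) = 0 →
      ∫⁻ t in Ioi 0,
          ENNReal.ofReal (t ^ s) * laplaceTransform ν (c * t) ^ p * ENNReal.ofReal t⁻¹ ≤
        ENNReal.ofReal C *
          ∑' j : ℤ, ENNReal.ofReal ((b ^ j) ^ (-s)) * ν (Ico (b ^ j) (b ^ (j + 1))) ^ p := by
  set w : ℤ → ℝ := fun m => (b ^ m) ^ (s / p) * exp (-(c * b ^ m))
  have hw : Summable w := summable_zpow_rpow_mul_exp_neg hb (by positivity) hc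
  have hwp : Summable fun m => w m ^ p := by
    refine (summable_zpow_rpow_mul_exp_neg hb hs (mul_pos hp hc)).congr fun m => ?_
    rw [mul_rpow (by positivity) (exp_pos _).le, ← rpow_mul (by positivity),
      div_mul_cancel₀ _ hp.ne', ← exp_mul]
    ring_nf
  have hwp_sum : ∑' m, ENNReal.ofReal (w m) ^ p = ENNReal.ofReal (∑' m, w m ^ p) := by
    rw [ENNReal.ofReal_tsum_of_nonneg (fun m => by positivity) hwp]
    exact tsum_congr fun m => ENNReal.ofReal_rpow_of_nonneg (by positivity) hp.le
  have hw_sum : (∑' m, ENNReal.ofReal (w m)) ^ p = ENNReal.ofReal ((∑' m, w m) ^ p) := by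
    rw [← ENNReal.ofReal_tsum_of_nonneg (fun m => by positivity) hw,
      ENNReal.ofReal_rpow_of_nonneg (tsum_nonneg fun m => by positivity) hp.le]
  have hw_pos : 0 < ∑' m, w m := hw.tsum_pos (fun m => by positivity) 0 (by positivity)
  have hwp_nonneg : 0 ≤ ∑' m, w m ^ p := tsum_nonneg fun m => by positivity
  refine ⟨b ^ (s + 1) * (∑' m, w m ^ p + (∑' m, w m) ^ p), by positivity, fun ν hν => ?_⟩
  set B : ℤ → ℝ≥0∞ := fun j =>
    ENNReal.ofReal ((b ^ j) ^ (-(s / p))) * ν (Ico (b ^ j) (b ^ (j + 1)))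
  have hB (j : ℤ) :
      B j ^ p = ENNReal.ofReal ((b ^ j) ^ (-s)) * ν (Ico (b ^ j) (b ^ (j + 1))) ^ p := by
    rw [ENNReal.mul_rpow_of_nonneg _ _ hp.le, ENNReal.ofReal_rpow_of_nonneg (by positivity) hp.le,
      ← rpow_mul (by positivity), neg_mul, div_mul_cancel₀ _ hp.ne']
  calc ∫⁻ t in Ioi 0,
        ENNReal.ofReal (t ^ s) * laplaceTransform ν (c * t) ^ p * ENNReal.ofReal t⁻¹
      ≤ ∑' n : ℤ, ENNReal.ofReal (b ^ (s + 1)) *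
          (∑' j, ENNReal.ofReal (w (n + j)) * B j) ^ p := by
        rw [setLIntegral_Ioi_eq_tsum_Ioc_zpow hb]
        exact ENNReal.tsum_le_tsum
          (setLIntegral_Ioc_zpow_laplaceTransform_le hν hb hc.le hs.le hp)
    _ ≤ ENNReal.ofReal (b ^ (s + 1)) *
          ((∑' m, ENNReal.ofReal (w m) ^ p + (∑' m, ENNReal.ofReal (w m)) ^ p) *
            ∑' j, B j ^ p) := by
        rw [ENNReal.tsum_mul_left]
        gcongr
        exact tsum_rpow_tsum_add_mul_le hp _ _
    _ = ENNReal.ofReal (b ^ (s + 1) * (∑' m, w m ^ p + (∑' m, w m) ^ p)) *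
          ∑' j : ℤ, ENNReal.ofReal ((b ^ j) ^ (-s)) * ν (Ico (b ^ j) (b ^ (j + 1))) ^ p := by
        rw [hwp_sum, hw_sum, ← ENNReal.ofReal_add hwp_nonneg (by positivity), ← mul_assoc,
          ← ENNReal.ofReal_mul (by positivity), tsum_congr hB]

def spectralMeasure (n : ℕ) (g : EuclideanSpace ℝ (Fin n) → ℂ) (α : ℝ) : Measure ℝ :=
  (volume.withDensity fun ξ => ENNReal.ofReal (‖g ξ‖ ^ 2)).map fun ξ => ‖ξ‖ ^ (2 * α)

theorem Ealpha_eq_laplaceTransform {n : ℕ} {g : EuclideanSpace ℝ (Fin n) → ℂ} (hg : Measurable g)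
    (α t : ℝ) : Ealpha n g α t = laplaceTransform (spectralMeasure n g α) (2 * t) := by
  rw [laplaceTransform, spectralMeasure, lintegral_map (by fun_prop) (by fun_prop),
    lintegral_withDensity_eq_lintegral_mul _ (by fun_prop) (by fun_prop), Ealpha]
  refine lintegral_congr fun ξ => ?_
  rw [Pi.mul_apply, ← ENNReal.ofReal_mul (by positivity), mul_comm, neg_mul]

theorem spectralMeasure_Iic_zero {n : ℕ} (hn : 1 ≤ n) (g : EuclideanSpace ℝ (Fin n) → ℂ)
    {α : ℝ} : spectralMeasure n g α (Iic 0) = 0 := by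
  have : Nonempty (Fin n) := ⟨⟨0, hn⟩⟩
  rw [spectralMeasure, Measure.map_apply (by fun_prop) measurableSet_Iic]
  refine withDensity_absolutelyContinuous _ _
    (measure_mono_null (fun ξ (hξ : ‖ξ‖ ^ (2 * α) ≤ 0) => ?_) (measure_singleton 0))
  by_contra h
  exact (rpow_pos_of_pos (norm_pos_iff.2 h) _).not_ge hξ

theorem ajBlock_eq_spectralMeasure_Ico_rpow {n : ℕ} (g : EuclideanSpace ℝ (Fin n) → ℂ) {α : ℝ}
    (hα : 0 < α) (j : ℤ) :
    ajBlock n g j =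
      spectralMeasure n g α (Ico ((2 ^ (2 * α)) ^ j) ((2 ^ (2 * α)) ^ (j + 1))) ^ (1 / 2 : ℝ) := by
  have hpow (k : ℤ) : ((2 : ℝ) ^ (2 * α)) ^ k = ((2 : ℝ) ^ (k : ℝ)) ^ (2 * α) := by
    rw [← rpow_intCast, ← rpow_mul zero_le_two, ← rpow_mul zero_le_two, mul_comm]
  rw [ajBlock, spectralMeasure, Measure.map_apply (by fun_prop) measurableSet_Ico,
    withDensity_apply _ (measurableSet_Ico.preimage (by fun_prop))]
  congr 3
  ext ξ
  have h2α : 0 < 2 * α := by positivity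
  simp only [mem_ofPred_eq, mem_preimage, mem_Ico, hpow]
  push_cast
  rw [rpow_le_rpow_iff (by positivity : (0 : ℝ) ≤ 2 ^ (j : ℝ)) (norm_nonneg ξ) h2α,
    rpow_lt_rpow_iff (norm_nonneg ξ) (by positivity : (0 : ℝ) ≤ 2 ^ ((j : ℝ) + 1)) h2α]

theorem ofReal_two_rpow_mul_ajBlock_rpow {n : ℕ} (g : EuclideanSpace ℝ (Fin n) → ℂ) {σ α q : ℝ}
    (hα : 0 < α) (hq : 0 < q) (j : ℤ) :
    (ENNReal.ofReal ((2 : ℝ) ^ (-(2 * (j : ℝ) * σ))) * ajBlock n g j) ^ q =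
      ENNReal.ofReal (((2 ^ (2 * α)) ^ j) ^ (-(q * σ / α))) *
        spectralMeasure n g α (Ico ((2 ^ (2 * α)) ^ j) ((2 ^ (2 * α)) ^ (j + 1))) ^ (q / 2) := by
  have hweight :
      ((2 : ℝ) ^ (-(2 * (j : ℝ) * σ))) ^ q = (((2 : ℝ) ^ (2 * α)) ^ j) ^ (-(q * σ / α)) := by
    rw [← rpow_intCast, ← rpow_mul zero_le_two, ← rpow_mul zero_le_two, ← rpow_mul zero_le_two]
    congr 1
    field_simp
  rw [ajBlock_eq_spectralMeasure_Ico_rpow g hα, ENNReal.mul_rpow_of_nonneg _ _ hq.le,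
    ENNReal.ofReal_rpow_of_nonneg (by positivity) hq.le, hweight, ← ENNReal.rpow_mul]
  ring_nf

theorem stmt11 (n : ℕ) (hn : 1 ≤ n) (σ α q : ℝ) (hσ : 0 < σ) (hα : 0 < α) (hq : 1 ≤ q) :
    ∃ C₁ C₂ : ℝ, 0 < C₁ ∧ 0 < C₂ ∧
      ∀ g : EuclideanSpace ℝ (Fin n) → ℂ, Measurable g →
        ENNReal.ofReal C₁ *
            ∑' j : ℤ, (ENNReal.ofReal ((2 : ℝ) ^ (-(2 * (j : ℝ) * σ))) * ajBlock n g j) ^ q ≤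
          (∫⁻ t in Set.Ioi (0 : ℝ),
            ENNReal.ofReal (t ^ (q * σ / α)) * (Ealpha n g α t) ^ (q / 2) *
              ENNReal.ofReal t⁻¹) ∧
        (∫⁻ t in Set.Ioi (0 : ℝ),
            ENNReal.ofReal (t ^ (q * σ / α)) * (Ealpha n g α t) ^ (q / 2) *
              ENNReal.ofReal t⁻¹) ≤
          ENNReal.ofReal C₂ *
            ∑' j : ℤ, (ENNReal.ofReal ((2 : ℝ) ^ (-(2 * (j : ℝ) * σ))) * ajBlock n g j) ^ q := by
  have hq0 : 0 < q := by linarith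
  have hb : (1 : ℝ) < 2 ^ (2 * α) := one_lt_rpow one_lt_two (by positivity)
  obtain ⟨C₁, hC₁, hlower⟩ := exists_tsum_blocks_le_lintegral_laplaceTransform hb
    zero_le_two (s := q * σ / α) (p := q / 2) (by positivity) (by positivity)
  obtain ⟨C₂, hC₂, hupper⟩ := exists_lintegral_laplaceTransform_le_tsum_blocks hb two_pos
    (s := q * σ / α) (by positivity) (half_pos hq0)
  refine ⟨C₁, C₂, hC₁, hC₂, fun g hg => ?_⟩
  simp_rw [Ealpha_eq_laplaceTransform hg, ofReal_two_rpow_mul_ajBlock_rpow g hα hq0]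
  exact ⟨hlower _, hupper _ (spectralMeasure_Iic_zero hn g)⟩
end
end

section
/- Let n ≥ 1 and g ∈ L²(ℝⁿ) be measurable. Define the Besov character σ(g) = sup{σ ∈ [0,∞) : sup_{j∈ℤ} 2^{−jσ} a_j(g) < ∞} ∈ [0,+∞] (this supremum set contains 0 since a_j(g) ≤ ‖g‖₂ for all j). If r* ∈ (−n/2, ∞) satisfies 0 < P_{r*}(g)₋ and P_{r*}(g)₊ < ∞ (i.e. the decay character of g exists and equals r*), then σ(g) = r* + n/2. -/
open MeasureTheory Filter Topology
open scoped ENNReal NNReal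

noncomputable section

/-- The Besov character `σ(g) = sup {σ ≥ 0 : sup_j 2^{-jσ} a_j(g) < ∞}`, valued in `[0,∞]`. -/
def besovChar (n : ℕ) (g : EuclideanSpace ℝ (Fin n) → ℂ) : ℝ≥0∞ :=
  sSup {x : ℝ≥0∞ | ∃ σ : ℝ, 0 ≤ σ ∧ x = ENNReal.ofReal σ ∧
    ∃ C : ℝ, ∀ j : ℤ, ajBlock n g j ≤ ENNReal.ofReal (C * (2 : ℝ) ^ (σ * (j : ℝ)))}

/-! With `σ = r* + n/2`, the hypotheses say that the mass of `|g|² dξ` in the ball of radius `ρ`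
is of exact order `ρ ^ (2σ)` as `ρ → 0`. The upper bound controls each small dyadic shell by the
ball containing it, and `g ∈ L²` controls the large ones, so `a_j ≲ 2 ^ (σ j)`. Conversely, a bound
`a_j ≲ 2 ^ (σ' j)` with `σ' > σ` sums over the shells inside a ball to `ρ ^ (2σ')`, which is
incompatible with the lower bound `P_{r*}(g)₋ > 0`. -/

open Set
open ENNReal (ofReal)

lemma tendsto_two_rpow_intCast_atBot :
    Tendsto (fun k : ℤ => (2 : ℝ) ^ (k : ℝ)) atBot (𝓝[>] 0) :=
  tendsto_nhdsWithin_iff.2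
    ⟨(tendsto_rpow_atBot_of_base_gt_one 2 one_lt_two).comp
        (tendsto_intCast_atBot_iff.2 tendsto_id),
      Eventually.of_forall fun k => Real.rpow_pos_of_pos two_pos (k : ℝ)⟩

lemma eventually_le_rpow_of_limsup_lt_top {φ : ℝ → ℝ≥0∞} {α : ℝ}
    (h : limsup (fun ρ => ofReal (ρ ^ (-α)) * φ ρ) (𝓝[>] 0) < ⊤) :
    ∃ K : ℝ, ∀ᶠ ρ in 𝓝[>] (0 : ℝ), φ ρ ≤ ofReal (K * ρ ^ α) := by
  obtain ⟨K, hK, -⟩ := ENNReal.lt_iff_exists_nnreal_btwn.1 h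
  refine ⟨K, ?_⟩
  filter_upwards [eventually_lt_of_limsup_lt hK, self_mem_nhdsWithin] with ρ hρK (hρ : 0 < ρ)
  have hinv : ofReal (ρ ^ α) * ofReal (ρ ^ (-α)) = 1 := by
    rw [← ENNReal.ofReal_mul (by positivity), ← Real.rpow_add hρ, add_neg_cancel,
      Real.rpow_zero, ENNReal.ofReal_one]
  calc φ ρ = ofReal (ρ ^ α) * (ofReal (ρ ^ (-α)) * φ ρ) := by rw [← mul_assoc, hinv, one_mul]
    _ ≤ ofReal (ρ ^ α) * ofReal K := by
        rw [ENNReal.ofReal_coe_nnreal]; exact mul_le_mul_right hρK.le _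
    _ = ofReal (K * ρ ^ α) := by rw [← ENNReal.ofReal_mul (by positivity), mul_comm]

lemma tendsto_ofReal_mul_rpow_nhdsGT_zero {α : ℝ} (hα : 0 < α) (K : ℝ) :
    Tendsto (fun ρ : ℝ => ofReal (K * ρ ^ α)) (𝓝[>] 0) (𝓝 0) := by
  have hcont : Tendsto (fun ρ : ℝ => K * ρ ^ α) (𝓝 0) (𝓝 (K * 0 ^ α)) :=
    (continuousAt_const.mul (Real.continuousAt_rpow_const 0 α (Or.inr hα.le))).tendsto
  simpa [Real.zero_rpow hα.ne'] using ENNReal.tendsto_ofReal (hcont.mono_left nhdsWithin_le_nhds)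

lemma tendsto_zero_of_eventually_le_rpow {φ : ℝ → ℝ≥0∞} {α K : ℝ} (hα : 0 < α)
    (h : ∀ᶠ ρ in 𝓝[>] (0 : ℝ), φ ρ ≤ ofReal (K * ρ ^ α)) :
    Tendsto φ (𝓝[>] 0) (𝓝 0) :=
  tendsto_of_tendsto_of_tendsto_of_le_of_le' tendsto_const_nhds
    (tendsto_ofReal_mul_rpow_nhdsGT_zero hα K) (Eventually.of_forall fun _ => zero_le) h

def dyadicShell (E : Type*) [Norm E] (j : ℤ) : Set E :=
  {ξ | (2 : ℝ) ^ (j : ℝ) ≤ ‖ξ‖ ∧ ‖ξ‖ < (2 : ℝ) ^ ((j : ℝ) + 1)}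

section DyadicShell

variable {E : Type*} [Norm E] [MeasurableSpace E] (ν : Measure E)

lemma measure_norm_lt_two_rpow_add_one_le (j : ℤ) :
    ν {ξ | ‖ξ‖ < (2 : ℝ) ^ ((j : ℝ) + 1)} ≤
      ν {ξ | ‖ξ‖ < (2 : ℝ) ^ (j : ℝ)} + ν (dyadicShell E j) := by
  refine (measure_mono fun ξ (hξ : ‖ξ‖ < _) => ?_).trans (measure_union_le _ _)
  by_cases hlt : ‖ξ‖ < (2 : ℝ) ^ (j : ℝ)
  · exact Or.inl hlt
  · exact Or.inr ⟨not_lt.1 hlt, hξ⟩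

lemma exists_measure_dyadicShell_le {β K : ℝ} (hν : ν univ ≠ ⊤) (hβ : 0 ≤ β)
    (h : ∀ᶠ ρ in 𝓝[>] (0 : ℝ), ν {ξ | ‖ξ‖ ≤ ρ} ≤ ofReal (K * ρ ^ β)) :
    ∃ C : ℝ, 0 ≤ C ∧ ∀ j : ℤ, ν (dyadicShell E j) ≤ ofReal (C * 2 ^ (β * j)) := by
  obtain ⟨j₀, hj₀⟩ := eventually_atBot.1 (tendsto_two_rpow_intCast_atBot.eventually h)
  set M := (ν univ).toReal
  refine ⟨max (K * 2 ^ β) (M * 2 ^ (-(β * j₀))), le_max_of_le_right (by positivity),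
    fun j => ?_⟩
  have h2j : (0 : ℝ) < 2 ^ (β * j) := by positivity
  rcases lt_or_ge j j₀ with hj | hj
  · calc ν (dyadicShell E j) ≤ ν {ξ | ‖ξ‖ ≤ (2 : ℝ) ^ ((j + 1 : ℤ) : ℝ)} :=
          measure_mono fun ξ hξ => by push_cast; exact hξ.2.le
      _ ≤ ofReal (K * ((2 : ℝ) ^ ((j + 1 : ℤ) : ℝ)) ^ β) := hj₀ _ (by omega)
      _ = ofReal (K * 2 ^ β * 2 ^ (β * j)) := by
          rw [← Real.rpow_mul zero_le_two, mul_assoc, ← Real.rpow_add two_pos]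
          push_cast; ring_nf
      _ ≤ _ := ENNReal.ofReal_le_ofReal <|
          mul_le_mul_of_nonneg_right (le_max_left _ _) h2j.le
  · have hone : (1 : ℝ) ≤ 2 ^ (-(β * j₀)) * 2 ^ (β * j) := by
      rw [← Real.rpow_add two_pos]
      exact Real.one_le_rpow one_le_two (by nlinarith [(Int.cast_le (R := ℝ)).2 hj])
    calc ν (dyadicShell E j) ≤ ν univ := measure_mono (subset_univ _)
      _ = ofReal M := (ENNReal.ofReal_toReal hν).symm
      _ ≤ ofReal (M * 2 ^ (-(β * j₀)) * 2 ^ (β * j)) := ENNReal.ofReal_le_ofReal <| by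
          rw [mul_assoc]; exact le_mul_of_one_le_right ENNReal.toReal_nonneg hone
      _ ≤ _ := ENNReal.ofReal_le_ofReal <|
          mul_le_mul_of_nonneg_right (le_max_right _ _) h2j.le

lemma measure_norm_lt_le_of_dyadicShell_le {β C : ℝ} (hβ : 0 < β) (hC : 0 ≤ C)
    (hshell : ∀ j : ℤ, ν (dyadicShell E j) ≤ ofReal (C * 2 ^ (β * j)))
    (h0 : Tendsto (fun ρ => ν {ξ | ‖ξ‖ ≤ ρ}) (𝓝[>] 0) (𝓝 0)) (k : ℤ) :
    ν {ξ | ‖ξ‖ < (2 : ℝ) ^ (k : ℝ)} ≤ ofReal (C / (2 ^ β - 1) * 2 ^ (β * k)) := by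
  set D := C / (2 ^ β - 1)
  have hq : (1 : ℝ) < 2 ^ β := Real.one_lt_rpow one_lt_two hβ
  -- `D` is the geometric sum `∑_{i ≥ 1} C 2^(-β i)`, so `D 2^(β k)` absorbs one more shell:
  have hD : D + C = D * 2 ^ β := by
    simp only [D]; field_simp [(sub_pos.2 hq).ne']; ring
  have htele : ∀ j ≤ k, ν {ξ | ‖ξ‖ < (2 : ℝ) ^ (k : ℝ)} ≤
      ν {ξ | ‖ξ‖ < (2 : ℝ) ^ (j : ℝ)} + ofReal (D * 2 ^ (β * k)) := by
    intro j hjk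
    induction k, hjk using Int.leInduction with
    | base => exact le_self_add
    | succ k _ ih =>
      calc ν {ξ | ‖ξ‖ < (2 : ℝ) ^ ((k + 1 : ℤ) : ℝ)}
          ≤ ν {ξ | ‖ξ‖ < (2 : ℝ) ^ (k : ℝ)} + ν (dyadicShell E k) := by
            push_cast; exact measure_norm_lt_two_rpow_add_one_le ν k
        _ ≤ ν {ξ | ‖ξ‖ < (2 : ℝ) ^ (j : ℝ)} + ofReal (D * 2 ^ (β * k))
              + ofReal (C * 2 ^ (β * k)) := add_le_add ih (hshell k)
        _ = ν {ξ | ‖ξ‖ < (2 : ℝ) ^ (j : ℝ)} + ofReal (D * 2 ^ (β * (k + 1 : ℤ))) := by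
            rw [add_assoc, ← ENNReal.ofReal_add (by positivity) (by positivity), ← add_mul, hD]
            push_cast
            rw [mul_add, mul_one, Real.rpow_add two_pos, mul_assoc, mul_comm (2 ^ β)]
  have hsmall : Tendsto (fun j : ℤ => ν {ξ | ‖ξ‖ < (2 : ℝ) ^ (j : ℝ)}) atBot (𝓝 0) :=
    tendsto_of_tendsto_of_tendsto_of_le_of_le tendsto_const_nhds
      (h0.comp tendsto_two_rpow_intCast_atBot) (fun _ => zero_le)
      fun j => measure_mono fun ξ (hξ : ‖ξ‖ < _) => hξ.le
  have hlim := hsmall.add_const (ofReal (D * 2 ^ (β * k)))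
  rw [zero_add] at hlim
  exact ge_of_tendsto hlim ((eventually_le_atBot k).mono htele)

lemma liminf_rpow_neg_mul_measure_eq_zero {α β D : ℝ} (hαβ : α < β)
    (hball : ∀ k : ℤ, ν {ξ | ‖ξ‖ < (2 : ℝ) ^ (k : ℝ)} ≤ ofReal (D * 2 ^ (β * k))) :
    liminf (fun ρ => ofReal (ρ ^ (-α)) * ν {ξ | ‖ξ‖ ≤ ρ}) (𝓝[>] 0) = 0 := by
  set u := fun ρ : ℝ => ofReal (ρ ^ (-α)) * ν {ξ | ‖ξ‖ ≤ ρ}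
  have hbound : ∀ k : ℤ, u (2 ^ (k : ℝ)) ≤ ofReal (D * 2 ^ β * (2 ^ (k : ℝ)) ^ (β - α)) := by
    intro k
    calc u (2 ^ (k : ℝ))
        ≤ ofReal ((2 ^ (k : ℝ)) ^ (-α)) * ofReal (D * 2 ^ (β * (k + 1 : ℤ))) := by
          refine mul_le_mul_right ((measure_mono fun ξ (hξ : ‖ξ‖ ≤ _) => ?_).trans (hball _)) _
          show ‖ξ‖ < _
          push_cast
          exact hξ.trans_lt (Real.rpow_lt_rpow_of_exponent_lt one_lt_two (lt_add_one _))
      _ = ofReal (D * 2 ^ β * (2 ^ (k : ℝ)) ^ (β - α)) := by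
          rw [← ENNReal.ofReal_mul (by positivity)]
          congr 1
          have h2 : ((2 : ℝ) ^ (k : ℝ)) ^ (-α) * 2 ^ (β * (k + 1 : ℤ)) =
              2 ^ β * (2 ^ (k : ℝ)) ^ (β - α) := by
            simp only [← Real.rpow_mul zero_le_two, ← Real.rpow_add two_pos]
            push_cast; ring_nf
          linear_combination D * h2
  have hdecay := (tendsto_ofReal_mul_rpow_nhdsGT_zero (sub_pos.2 hαβ) (D * 2 ^ β)).comp
    tendsto_two_rpow_intCast_atBot
  have hu : Tendsto (u ∘ fun k : ℤ => (2 : ℝ) ^ (k : ℝ)) atBot (𝓝 0) :=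
    tendsto_of_tendsto_of_tendsto_of_le_of_le tendsto_const_nhds hdecay (fun _ => zero_le) hbound
  exact le_antisymm ((tendsto_two_rpow_intCast_atBot.liminf_le_liminf_comp).trans hu.liminf_eq.le)
    zero_le

end DyadicShell

lemma rpow_half_le_ofReal_iff {x : ℝ≥0∞} {c : ℝ} (hc : 0 ≤ c) :
    x ^ (1 / 2 : ℝ) ≤ ofReal c ↔ x ≤ ofReal (c ^ 2) := by
  rw [one_div, ENNReal.rpow_inv_le_iff two_pos, ENNReal.ofReal_rpow_of_nonneg hc zero_le_two,
    Real.rpow_two]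

def energyMeasure {E F : Type*} [MeasureSpace E] [Norm F] (g : E → F) : Measure E :=
  volume.withDensity fun ξ => ofReal (‖g ξ‖ ^ 2)

lemma energyMeasure_univ_ne_top {E F : Type*} [MeasureSpace E] [SFinite (volume : Measure E)]
    [NormedAddCommGroup F] {g : E → F} (hg : MemLp g 2) : energyMeasure g univ ≠ ⊤ := by
  rw [energyMeasure, withDensity_apply', Measure.restrict_univ]
  exact ((memLp_two_iff_integrable_sq_norm hg.1).1 hg).lintegral_lt_top.ne

section EuclideanSpace

variable (n : ℕ) (g : EuclideanSpace ℝ (Fin n) → ℂ)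

lemma decayFun_eq_energyMeasure (r : ℝ) :
    decayFun n g r = fun ρ => ofReal (ρ ^ (-(2 * r + n))) * energyMeasure g {ξ | ‖ξ‖ ≤ ρ} := by
  funext ρ
  rw [decayFun, energyMeasure, withDensity_apply']

lemma ajBlock_eq_energyMeasure (j : ℤ) :
    ajBlock n g j = energyMeasure g (dyadicShell _ j) ^ (1 / 2 : ℝ) := by
  rw [ajBlock, energyMeasure, withDensity_apply', dyadicShell]

lemma exists_ajBlock_le_iff (σ : ℝ) :
    (∃ C : ℝ, ∀ j : ℤ, ajBlock n g j ≤ ofReal (C * 2 ^ (σ * j))) ↔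
      ∃ C : ℝ, 0 ≤ C ∧
        ∀ j : ℤ, energyMeasure g (dyadicShell _ j) ≤ ofReal (C * 2 ^ (2 * σ * j)) := by
  have hsq (C : ℝ) (j : ℤ) : (C * (2 : ℝ) ^ (σ * j)) ^ 2 = C ^ 2 * 2 ^ (2 * σ * j) := by
    rw [mul_pow, ← Real.rpow_two (2 ^ _), ← Real.rpow_mul zero_le_two]
    ring_nf
  simp only [ajBlock_eq_energyMeasure]
  constructor
  · rintro ⟨C, hC⟩
    refine ⟨max C 0 ^ 2, sq_nonneg _, fun j => ?_⟩
    rw [← hsq, ← rpow_half_le_ofReal_iff (by positivity)]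
    exact (hC j).trans <| ENNReal.ofReal_le_ofReal <|
      mul_le_mul_of_nonneg_right (le_max_left C 0) (by positivity)
  · rintro ⟨C, hC0, hC⟩
    refine ⟨√C, fun j => ?_⟩
    rw [rpow_half_le_ofReal_iff (by positivity), hsq, Real.sq_sqrt hC0]
    exact hC j

lemma besovChar_eq_ofReal {σ : ℝ} (hσ : 0 ≤ σ)
    (hmem : ∃ C : ℝ, ∀ j : ℤ, ajBlock n g j ≤ ofReal (C * 2 ^ (σ * j)))
    (hmax : ∀ σ' : ℝ, (∃ C : ℝ, ∀ j : ℤ, ajBlock n g j ≤ ofReal (C * 2 ^ (σ' * j))) → σ' ≤ σ) :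
    besovChar n g = ofReal σ :=
  IsGreatest.csSup_eq ⟨⟨σ, hσ, rfl, hmem⟩, by
    rintro _ ⟨σ', -, rfl, h⟩
    exact ENNReal.ofReal_le_ofReal (hmax σ' h)⟩

end EuclideanSpace

theorem stmt14_general (n : ℕ) (g : EuclideanSpace ℝ (Fin n) → ℂ)
    (hg : MemLp g 2 (volume : Measure (EuclideanSpace ℝ (Fin n))))
    (rstar : ℝ) (hlow : -(n : ℝ) / 2 < rstar)
    (hPm : 0 < Pminus n g rstar) (hPp : Pplus n g rstar < ⊤) :
    besovChar n g = ENNReal.ofReal (rstar + (n : ℝ) / 2) := by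
  have hσ : 0 < rstar + (n : ℝ) / 2 := by linarith
  have hα : 2 * rstar + (n : ℝ) = 2 * (rstar + n / 2) := by ring
  rw [Pminus, decayFun_eq_energyMeasure, hα] at hPm
  rw [Pplus, decayFun_eq_energyMeasure, hα] at hPp
  obtain ⟨K, hK⟩ := eventually_le_rpow_of_limsup_lt_top hPp
  refine besovChar_eq_ofReal n g hσ.le ((exists_ajBlock_le_iff n g _).2 ?_) fun σ' hσ' => ?_
  · exact exists_measure_dyadicShell_le _ (energyMeasure_univ_ne_top hg) (by positivity) hK
  · obtain ⟨C, hC0, hC⟩ := (exists_ajBlock_le_iff n g σ').1 hσ'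
    by_contra! hlt
    have hball := measure_norm_lt_le_of_dyadicShell_le _ (by linarith) hC0 hC
      (tendsto_zero_of_eventually_le_rpow (by positivity) hK)
    exact hPm.ne' (liminf_rpow_neg_mul_measure_eq_zero _ (by linarith) hball)

theorem stmt14 (n : ℕ) (hn : 1 ≤ n) (g : EuclideanSpace ℝ (Fin n) → ℂ)
    (hg_meas : Measurable g) (hg : MemLp g 2 (volume : Measure (EuclideanSpace ℝ (Fin n))))
    (rstar : ℝ) (hlow : -(n : ℝ) / 2 < rstar)
    (hPm : 0 < Pminus n g rstar) (hPp : Pplus n g rstar < ⊤) :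
    besovChar n g = ENNReal.ofReal (rstar + (n : ℝ) / 2) :=
  stmt14_general n g hg rstar hlow hPm hPp
end
end

section
/- Let n ≥ 1, s ≥ 0, and let g ∈ L²(ℝⁿ) be measurable such that h(ξ) := |ξ|^s g(ξ) also belongs to L²(ℝⁿ) (i.e. the initial datum with Fourier transform g lies in the Sobolev space H^s). If r* ∈ (−n/2, ∞) satisfies 0 < P_{r*}(g)₋ and P_{r*}(g)₊ < ∞, then 0 < P_{r*+s}(h)₋ and P_{r*+s}(h)₊ < ∞. In other words, if the decay character of u₀ exists and equals r*, then the decay character of Λ^s u₀ (where Λ = √(−Δ)) exists and equals r* + s. -/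
open MeasureTheory Filter Topology
open scoped ENNReal NNReal

noncomputable section

/-! On the ball `|ξ| ≤ ρ` the weight `|ξ|^{2s}` is at most `ρ^{2s}`, which gives the upper
bound. For the lower bound, the weight is at least `(θρ)^{2s}` on the annulus `θρ < |ξ| ≤ ρ`,
and after rescaling, the mass of `g` on the inner ball `|ξ| ≤ θρ` is at most `θ^{2r*+n} P₊`;
since `2r* + n > 0`, for small `θ` this is negligible against `P₋`. -/

lemma ofReal_rpow_mul_ofReal_rpow {x : ℝ} (hx : 0 < x) (a b : ℝ) :
    ENNReal.ofReal (x ^ a) * ENNReal.ofReal (x ^ b) = ENNReal.ofReal (x ^ (a + b)) := by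
  rw [← ENNReal.ofReal_mul (by positivity), ← Real.rpow_add hx]

lemma ofReal_mul_rpow {x y : ℝ} (hx : 0 ≤ x) (hy : 0 ≤ y) (a : ℝ) :
    ENNReal.ofReal ((x * y) ^ a) = ENNReal.ofReal (x ^ a) * ENNReal.ofReal (y ^ a) := by
  rw [Real.mul_rpow hx hy, ENNReal.ofReal_mul (by positivity)]

lemma exists_pos_ofReal_rpow_mul_lt {e : ℝ} (he : 0 < e) {a b : ℝ≥0∞} (ha : 0 < a)
    (hb : b ≠ ⊤) : ∃ θ > 0, ENNReal.ofReal (θ ^ e) * b < a := by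
  have hlim : Tendsto (fun θ : ℝ => ENNReal.ofReal (θ ^ e) * b) (𝓝[>] 0) (𝓝 0) := by
    have hpow : Tendsto (fun θ : ℝ => θ ^ e) (𝓝 0) (𝓝 0) := by
      simpa [Real.zero_rpow he.ne'] using
        (Real.continuousAt_rpow_const 0 e (Or.inr he.le)).tendsto
    simpa using ENNReal.Tendsto.mul_const
      (ENNReal.tendsto_ofReal (hpow.mono_left nhdsWithin_le_nhds)) (Or.inr hb)
  exact ((hlim.eventually (gt_mem_nhds ha)).and self_mem_nhdsWithin).exists.imp
    fun θ h => ⟨h.2, h.1⟩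

def lowFreqEnergy {n : ℕ} (g : EuclideanSpace ℝ (Fin n) → ℂ) (ρ : ℝ) : ℝ≥0∞ :=
  ∫⁻ ξ in {ξ : EuclideanSpace ℝ (Fin n) | ‖ξ‖ ≤ ρ}, ENNReal.ofReal (‖g ξ‖ ^ 2)

section

open ENNReal (ofReal)

variable {n : ℕ} (g : EuclideanSpace ℝ (Fin n) → ℂ) {s : ℝ}

lemma decayFun_eq (r ρ : ℝ) :
    decayFun n g r ρ = ofReal (ρ ^ (-(2 * r + (n : ℝ)))) * lowFreqEnergy g ρ :=
  rfl

lemma ofReal_sq_norm_rpow_mul (ξ : EuclideanSpace ℝ (Fin n)) :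
    ofReal (‖((‖ξ‖ ^ s : ℝ) : ℂ) * g ξ‖ ^ 2)
      = ofReal (‖ξ‖ ^ (2 * s)) * ofReal (‖g ξ‖ ^ 2) := by
  rw [norm_mul, Complex.norm_real, Real.norm_of_nonneg (by positivity), mul_pow,
    ENNReal.ofReal_mul (by positivity), mul_comm 2 s,
    Real.rpow_mul (norm_nonneg ξ), Real.rpow_two]

lemma lowFreqEnergy_rpow_mul_le (hs : 0 ≤ s) (ρ : ℝ) :
    lowFreqEnergy (fun ξ => ((‖ξ‖ ^ s : ℝ) : ℂ) * g ξ) ρ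
      ≤ ofReal (ρ ^ (2 * s)) * lowFreqEnergy g ρ := by
  rw [lowFreqEnergy, lowFreqEnergy, ← lintegral_const_mul' _ _ ENNReal.ofReal_ne_top]
  refine setLIntegral_mono' (measurableSet_le measurable_norm measurable_const) fun ξ hξ => ?_
  rw [ofReal_sq_norm_rpow_mul]
  gcongr
  exact hξ

lemma rpow_mul_lowFreqEnergy_le (hs : 0 ≤ s) {t : ℝ} (ht : 0 ≤ t) (ρ : ℝ) :
    ofReal (t ^ (2 * s)) * lowFreqEnergy g ρ
      ≤ ofReal (t ^ (2 * s)) * lowFreqEnergy g t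
        + lowFreqEnergy (fun ξ => ((‖ξ‖ ^ s : ℝ) : ℂ) * g ξ) ρ := by
  set B : ℝ → Set (EuclideanSpace ℝ (Fin n)) := fun t => {ξ | ‖ξ‖ ≤ t}
  have hsplit : lowFreqEnergy g ρ
      ≤ lowFreqEnergy g t + ∫⁻ ξ in B ρ \ B t, ofReal (‖g ξ‖ ^ 2) := by
    refine (lintegral_mono_set ?_).trans (lintegral_union_le _ (B t) (B ρ \ B t))
    rw [Set.union_sdiff_self]
    exact Set.subset_union_right
  have hannulus : ofReal (t ^ (2 * s)) * ∫⁻ ξ in B ρ \ B t, ofReal (‖g ξ‖ ^ 2)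
      ≤ lowFreqEnergy (fun ξ => ((‖ξ‖ ^ s : ℝ) : ℂ) * g ξ) ρ := by
    rw [← lintegral_const_mul' _ _ ENNReal.ofReal_ne_top]
    refine (setLIntegral_mono' ?_ fun ξ hξ => ?_).trans (lintegral_mono_set Set.sdiff_subset)
    · exact (measurableSet_le measurable_norm measurable_const).diff
        (measurableSet_le measurable_norm measurable_const)
    · rw [ofReal_sq_norm_rpow_mul]
      have : t ≤ ‖ξ‖ := (not_le.mp hξ.2).le
      gcongr
  calc ofReal (t ^ (2 * s)) * lowFreqEnergy g ρ
      ≤ ofReal (t ^ (2 * s)) * (lowFreqEnergy g t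
          + ∫⁻ ξ in B ρ \ B t, ofReal (‖g ξ‖ ^ 2)) := by gcongr
    _ ≤ _ := by rw [mul_add]; gcongr

lemma decayFun_rpow_mul_le (hs : 0 ≤ s) (r : ℝ) {ρ : ℝ} (hρ : 0 < ρ) :
    decayFun n (fun ξ => ((‖ξ‖ ^ s : ℝ) : ℂ) * g ξ) (r + s) ρ ≤ decayFun n g r ρ := by
  rw [decayFun_eq, decayFun_eq]
  calc _ ≤ ofReal (ρ ^ (-(2 * (r + s) + (n : ℝ)))) *
        (ofReal (ρ ^ (2 * s)) * lowFreqEnergy g ρ) := by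
        gcongr
        exact lowFreqEnergy_rpow_mul_le g hs ρ
    _ = _ := by
      rw [← mul_assoc, ofReal_rpow_mul_ofReal_rpow hρ]
      ring_nf

lemma rpow_mul_decayFun_le (hs : 0 ≤ s) (r : ℝ) {θ ρ : ℝ} (hθ : 0 < θ) (hρ : 0 < ρ) :
    ofReal (θ ^ (2 * s)) * decayFun n g r ρ
      ≤ ofReal (θ ^ (2 * s)) *
          (ofReal (θ ^ (2 * r + (n : ℝ))) * decayFun n g r (θ * ρ))
        + decayFun n (fun ξ => ((‖ξ‖ ^ s : ℝ) : ℂ) * g ξ) (r + s) ρ := by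
  have hweight : ofReal (ρ ^ (-(2 * (r + s) + (n : ℝ)))) * ofReal ((θ * ρ) ^ (2 * s))
      = ofReal (θ ^ (2 * s)) * ofReal (ρ ^ (-(2 * r + (n : ℝ)))) := by
    rw [ofReal_mul_rpow hθ.le hρ.le, mul_left_comm, ofReal_rpow_mul_ofReal_rpow hρ]
    ring_nf
  have hscale : ofReal (ρ ^ (-(2 * r + (n : ℝ))))
      = ofReal (θ ^ (2 * r + (n : ℝ))) * ofReal ((θ * ρ) ^ (-(2 * r + (n : ℝ)))) := by
    rw [ofReal_mul_rpow hθ.le hρ.le, ← mul_assoc, ofReal_rpow_mul_ofReal_rpow hθ,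
      add_neg_cancel, Real.rpow_zero, ENNReal.ofReal_one, one_mul]
  simp only [decayFun_eq]
  calc _ = ofReal (ρ ^ (-(2 * (r + s) + (n : ℝ)))) *
          (ofReal ((θ * ρ) ^ (2 * s)) * lowFreqEnergy g ρ) := by
        rw [← mul_assoc, ← mul_assoc, hweight]
    _ ≤ ofReal (ρ ^ (-(2 * (r + s) + (n : ℝ)))) *
          (ofReal ((θ * ρ) ^ (2 * s)) * lowFreqEnergy g (θ * ρ)
            + lowFreqEnergy (fun ξ => ((‖ξ‖ ^ s : ℝ) : ℂ) * g ξ) ρ) := by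
        gcongr
        exact rpow_mul_lowFreqEnergy_le g hs (mul_pos hθ hρ).le ρ
    _ = _ := by
        rw [mul_add, ← mul_assoc, hweight, mul_assoc, hscale, mul_assoc]

lemma Pplus_rpow_mul_le (hs : 0 ≤ s) (r : ℝ) :
    Pplus n (fun ξ => ((‖ξ‖ ^ s : ℝ) : ℂ) * g ξ) (r + s) ≤ Pplus n g r :=
  limsup_le_limsup <| eventually_mem_nhdsWithin.mono fun _ hρ => decayFun_rpow_mul_le g hs r hρ

lemma Pminus_rpow_mul_pos (hs : 0 ≤ s) {r : ℝ} (he : 0 < 2 * r + (n : ℝ))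
    (hPm : 0 < Pminus n g r) (hPp : Pplus n g r < ⊤) :
    0 < Pminus n (fun ξ => ((‖ξ‖ ^ s : ℝ) : ℂ) * g ξ) (r + s) := by
  obtain ⟨a, ha0, ha⟩ := exists_between hPm
  obtain ⟨b, hb, hb_top⟩ := exists_between hPp
  obtain ⟨θ, hθ, hθab⟩ := exists_pos_ofReal_rpow_mul_lt he ha0 hb_top.ne
  set k := ofReal (θ ^ (2 * s))
  set c := ofReal (θ ^ (2 * r + (n : ℝ)))
  have hk : k ≠ 0 := (ENNReal.ofReal_pos.2 (Real.rpow_pos_of_pos hθ _)).ne'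
  have hbound : ∀ᶠ ρ in 𝓝[>] 0, k * a - k * (c * b)
      ≤ decayFun n (fun ξ => ((‖ξ‖ ^ s : ℝ) : ℂ) * g ξ) (r + s) ρ := by
    filter_upwards [eventually_lt_of_lt_liminf ha,
      eventually_nhdsGT_zero_mul_left hθ (eventually_lt_of_limsup_lt hb),
      self_mem_nhdsWithin] with ρ hρa hρb hρ
    rw [tsub_le_iff_left]
    calc k * a ≤ k * decayFun n g r ρ := by gcongr
      _ ≤ k * (c * decayFun n g r (θ * ρ)) + _ := rpow_mul_decayFun_le g hs r hθ hρ
      _ ≤ k * (c * b) + _ := by gcongr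
  calc 0 < k * a - k * (c * b) :=
        tsub_pos_of_lt (ENNReal.mul_lt_mul_right hk ENNReal.ofReal_ne_top hθab)
    _ ≤ _ := le_liminf_of_le (h := hbound)

end

theorem stmt15_general (n : ℕ) (s : ℝ) (hs : 0 ≤ s)
    (g : EuclideanSpace ℝ (Fin n) → ℂ)
    (rstar : ℝ) (hlow : -(n : ℝ) / 2 < rstar)
    (hPm : 0 < Pminus n g rstar) (hPp : Pplus n g rstar < ⊤) :
    0 < Pminus n (fun ξ => ((‖ξ‖ ^ s : ℝ) : ℂ) * g ξ) (rstar + s) ∧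
    Pplus n (fun ξ => ((‖ξ‖ ^ s : ℝ) : ℂ) * g ξ) (rstar + s) < ⊤ :=
  ⟨Pminus_rpow_mul_pos g hs (by linarith) hPm hPp, (Pplus_rpow_mul_le g hs rstar).trans_lt hPp⟩

theorem stmt15 (n : ℕ) (hn : 1 ≤ n) (s : ℝ) (hs : 0 ≤ s)
    (g : EuclideanSpace ℝ (Fin n) → ℂ) (hg_meas : Measurable g)
    (hg : MemLp g 2 (volume : Measure (EuclideanSpace ℝ (Fin n))))
    (hh : MemLp (fun ξ : EuclideanSpace ℝ (Fin n) => ((‖ξ‖ ^ s : ℝ) : ℂ) * g ξ) 2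
      (volume : Measure (EuclideanSpace ℝ (Fin n))))
    (rstar : ℝ) (hlow : -(n : ℝ) / 2 < rstar)
    (hPm : 0 < Pminus n g rstar) (hPp : Pplus n g rstar < ⊤) :
    0 < Pminus n (fun ξ => ((‖ξ‖ ^ s : ℝ) : ℂ) * g ξ) (rstar + s) ∧
    Pplus n (fun ξ => ((‖ξ‖ ^ s : ℝ) : ℂ) * g ξ) (rstar + s) < ⊤ :=
  stmt15_general n s hs g rstar hlow hPm hPp
end
end

section
/- Let n ≥ 1, let g ∈ L²(ℝⁿ) be measurable, and let σ* > 0. Then g satisfies the weak A-condition with exponent σ* if and only if, setting r* = σ* − n/2 ∈ (−n/2, ∞), one has 0 < P_{r*}(g)₋ and P_{r*}(g)₊ < ∞. In other words, the decay character of g exists and lies in (−n/2, ∞) if and only if g satisfies the weak A-condition for some σ* > 0, and in that case the decay character equals σ* − n/2. -/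
open MeasureTheory Filter Topology
open scoped ENNReal NNReal

noncomputable section

/-!
Write `F(ρ)` for the mass of `|g|²` on the ball of radius `ρ`, `b_j = a_j(g)²` for its mass on
the dyadic annulus `A_j`, and `s = 2σ*`. The decay indicators compare `F(ρ)` with `ρ^s`, the weak
A-condition compares `b_j` with `2^{sj}`, and the two are linked by `b_j ≤ F(2^{j+1})` and
`F(2^J) ≤ F(2^{J-N}) + b_{J-N} + ⋯ + b_J`.

An upper bound `b_j ≲ 2^{sj}` sums geometrically to `F(ρ) ≲ ρ^s`; conversely `F(ρ) ≲ ρ^s` bounds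
the small annuli, and `g ∈ L²` the large ones. Since the `j_k` have bounded gaps, every small ball
contains some `A_{j_k}` of comparable radius, whence `F(ρ) ≳ ρ^s`. Conversely, if
`ρ^s ≲ F(ρ) ≲ ρ^s` and `N` is large, the ball of radius `2^{J-N}` carries less than half of
`F(2^J)`, so one of the `N + 1` annuli `A_{J-N}, …, A_J` carries a fixed fraction of `2^{sJ}`;
these annuli give the sequence `j_k`, with gaps at most `N + 1`.
-/

open Set

section Dyadic

variable {E : Type*} [NormedAddCommGroup E]

def dyadicAnnulus (j : ℤ) : Set E := {x | (2 : ℝ) ^ j ≤ ‖x‖ ∧ ‖x‖ < 2 ^ (j + 1)}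

lemma exists_nat_mem_dyadicAnnulus {x : E} (hx : x ≠ 0) {J : ℤ} (hxJ : ‖x‖ ≤ 2 ^ J) :
    ∃ i : ℕ, x ∈ dyadicAnnulus (J - i) := by
  obtain ⟨j, hj⟩ := exists_mem_Ico_zpow (norm_pos_iff.2 hx) one_lt_two
  have : j ≤ J := (zpow_le_zpow_iff_right₀ one_lt_two).1 (hj.1.trans hxJ)
  exact ⟨(J - j).toNat, by rwa [Int.toNat_of_nonneg (by omega), sub_sub_cancel]⟩

lemma lintegral_biUnion_finset_le {α ι : Type*} [MeasurableSpace α] {μ : Measure α}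
    (s : Finset ι) (t : ι → Set α) (f : α → ℝ≥0∞) :
    ∫⁻ x in ⋃ i ∈ s, t i, f x ∂μ ≤ ∑ i ∈ s, ∫⁻ x in t i, f x ∂μ := calc
  _ ≤ ∫⁻ x, f x ∂(Measure.sum fun i : s => μ.restrict (t i)) :=
      lintegral_mono' (Measure.restrict_biUnion_le s.countable_toSet) le_rfl
  _ = ∑ i ∈ s, ∫⁻ x in t i, f x ∂μ := by
      rw [lintegral_sum_measure]
      exact Finset.tsum_subtype s fun i => ∫⁻ x in t i, f x ∂μ

variable [MeasurableSpace E] (μ : Measure E) (f : E → ℝ≥0∞)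

def ballMass (ρ : ℝ) : ℝ≥0∞ := ∫⁻ x in {x : E | ‖x‖ ≤ ρ}, f x ∂μ

def annulusMass (j : ℤ) : ℝ≥0∞ := ∫⁻ x in dyadicAnnulus j, f x ∂μ

lemma ballMass_mono : Monotone (ballMass μ f) :=
  fun _ _ h => lintegral_mono_set fun _ hx => le_trans hx h

lemma annulusMass_le_ballMass (j : ℤ) : annulusMass μ f j ≤ ballMass μ f (2 ^ (j + 1)) :=
  lintegral_mono_set fun _ hx => hx.2.le

lemma annulusMass_le_lintegral (j : ℤ) : annulusMass μ f j ≤ ∫⁻ x, f x ∂μ :=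
  setLIntegral_le_lintegral _ _

lemma ballMass_zpow_le_tsum (hμ : μ {0} = 0) (J : ℤ) :
    ballMass μ f (2 ^ J) ≤ ∑' i : ℕ, annulusMass μ f (J - i) := by
  have hcover : {x : E | ‖x‖ ≤ 2 ^ J} ⊆ {0} ∪ ⋃ i : ℕ, dyadicAnnulus (J - i) := by
    intro x hx
    by_cases h0 : x = 0
    · exact Or.inl h0
    · exact Or.inr (mem_iUnion.2 (exists_nat_mem_dyadicAnnulus h0 hx))
  calc ballMass μ f (2 ^ J)
      ≤ (∫⁻ x in {0}, f x ∂μ) + ∫⁻ x in ⋃ i : ℕ, dyadicAnnulus (J - i), f x ∂μ :=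
        (lintegral_mono_set hcover).trans (lintegral_union_le _ _ _)
    _ ≤ ∑' i : ℕ, annulusMass μ f (J - i) := by
        rw [setLIntegral_measure_zero _ _ hμ, zero_add]
        exact lintegral_iUnion_le _ _

lemma ballMass_zpow_le_add_sum (J : ℤ) (N : ℕ) :
    ballMass μ f (2 ^ J) ≤
      ballMass μ f (2 ^ (J - N)) + ∑ i ∈ Finset.range (N + 1), annulusMass μ f (J - i) := by
  have hcover : {x : E | ‖x‖ ≤ 2 ^ J} ⊆
      {x | ‖x‖ ≤ 2 ^ (J - N)} ∪ ⋃ i ∈ Finset.range (N + 1), dyadicAnnulus (J - i) := by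
    intro x hx
    by_cases hxN : ‖x‖ ≤ 2 ^ (J - N)
    · exact Or.inl hxN
    · have hx0 : x ≠ 0 := by
        rintro rfl
        exact hxN (by simp [zpow_nonneg])
      obtain ⟨i, hi⟩ := exists_nat_mem_dyadicAnnulus hx0 hx
      have : J - N < J - i + 1 :=
        (zpow_lt_zpow_iff_right₀ one_lt_two).1 ((not_le.1 hxN).trans hi.2)
      exact Or.inr (mem_biUnion (Finset.mem_range.2 (by omega)) hi)
  exact (lintegral_mono_set hcover).trans <| (lintegral_union_le _ _ _).trans <|
    add_le_add_right (lintegral_biUnion_finset_le _ _ _) _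

end Dyadic

lemma tendsto_two_zpow_atBot_nhdsGT : Tendsto (fun j : ℤ => (2 : ℝ) ^ j) atBot (𝓝[>] 0) := by
  refine tendsto_nhdsWithin_iff.2
    ⟨?_, Eventually.of_forall fun j => mem_Ioi.2 (zpow_pos two_pos j)⟩
  have := (tendsto_rpow_atBot_of_base_gt_one 2 one_lt_two).comp
    (tendsto_intCast_atBot_iff.2 tendsto_id : Tendsto (fun j : ℤ => (j : ℝ)) atBot atBot)
  simpa only [Function.comp_def, Real.rpow_intCast] using this

lemma exists_mem_Icc_of_tendsto_atBot {jk : ℕ → ℤ} (hjk : Tendsto jk atTop atBot) {M : ℕ}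
    (hM : ∀ k, |jk k - jk (k + 1)| ≤ M) {t : ℤ} (ht : t ≤ jk 0) :
    ∃ k, jk k ∈ Icc (t - M) t := by
  have hex : ∃ k, jk k ≤ t := (hjk.eventually (eventually_le_atBot t)).exists
  obtain ⟨k, hk, hmin⟩ : ∃ k, jk k ≤ t ∧ ∀ i < k, t < jk i :=
    ⟨Nat.find hex, Nat.find_spec hex, fun i hi => not_le.1 (Nat.find_min hex hi)⟩
  refine ⟨k, ?_, hk⟩
  rcases k with _ | k
  · omega
  · have := hmin k k.lt_succ_self
    have := abs_le.1 (hM k)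
    omega

lemma exists_seq_tendsto_atBot_of_eventually_exists_sub {P : ℤ → Prop} {N : ℕ}
    (h : ∀ᶠ J : ℤ in atBot, ∃ i ≤ N, P (J - i)) :
    ∃ jk : ℕ → ℤ, Tendsto jk atTop atBot ∧ (∀ k, |jk k - jk (k + 1)| ≤ (N + 1 : ℕ)) ∧
      ∀ k, P (jk k) := by
  obtain ⟨J₀, hJ₀⟩ := eventually_atBot.1 h
  choose I hI hP using fun k : ℕ => hJ₀ (J₀ - k) (by omega)
  refine ⟨fun k => J₀ - k - I k, ?_, fun k => ?_, hP⟩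
  · refine tendsto_atBot.2 fun b => eventually_atTop.2 ⟨(J₀ - b).toNat, fun k hk => ?_⟩
    have := hI k
    omega
  · have := hI k
    have := hI (k + 1)
    rw [abs_le]
    constructor <;> push_cast <;> omega

section DyadicBounds

variable {E : Type*} [NormedAddCommGroup E] [MeasurableSpace E] {μ : Measure E} {f : E → ℝ≥0∞}
  {s : ℝ}

lemma ballMass_le_of_annulusMass_le (hμ : μ {0} = 0) (hs : 0 < s) {C : ℝ} (hC : 0 ≤ C)
    (hb : ∀ j : ℤ, annulusMass μ f j ≤ ENNReal.ofReal (C * (2 ^ s) ^ j)) {ρ : ℝ} (hρ : 0 < ρ) :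
    ballMass μ f ρ ≤ ENNReal.ofReal (C * 2 ^ s / (1 - (2 ^ s)⁻¹) * ρ ^ s) := by
  set q : ℝ := 2 ^ s
  have hq : 1 < q := Real.one_lt_rpow one_lt_two hs
  have hq0 : 0 < q := zero_lt_one.trans hq
  have hq' : q⁻¹ < 1 := inv_lt_one_of_one_lt₀ hq
  obtain ⟨J, hJ⟩ := exists_mem_Ioc_zpow hρ one_lt_two
  have hgeom (i : ℕ) : C * q ^ (J + 1 - i) = C * q ^ (J + 1) * q⁻¹ ^ i := by
    rw [zpow_sub₀ hq0.ne', zpow_natCast, div_eq_mul_inv, inv_pow, mul_assoc]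
  calc ballMass μ f ρ ≤ ballMass μ f (2 ^ (J + 1)) := ballMass_mono μ f hJ.2
    _ ≤ ∑' i : ℕ, annulusMass μ f (J + 1 - i) := ballMass_zpow_le_tsum μ f hμ _
    _ ≤ ∑' i : ℕ, ENNReal.ofReal (C * q ^ (J + 1) * q⁻¹ ^ i) :=
        ENNReal.tsum_le_tsum fun i => (hb _).trans_eq (by rw [hgeom])
    _ = ENNReal.ofReal (C * q ^ (J + 1) * (1 - q⁻¹)⁻¹) := by
        rw [← ENNReal.ofReal_tsum_of_nonneg (fun i => by positivity)
          ((summable_geometric_of_lt_one (by positivity) hq').mul_left _), tsum_mul_left,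
          tsum_geometric_of_lt_one (by positivity) hq']
    _ ≤ ENNReal.ofReal (C * q / (1 - q⁻¹) * ρ ^ s) := by
        refine ENNReal.ofReal_le_ofReal ?_
        have hJs : q ^ J ≤ ρ ^ s := by
          rw [Real.rpow_zpow_comm zero_le_two]
          exact Real.rpow_le_rpow (zpow_nonneg zero_le_two _) hJ.1.le hs.le
        have : 0 ≤ C * q * (1 - q⁻¹)⁻¹ := by
          have := sub_pos.2 hq'
          positivity
        calc C * q ^ (J + 1) * (1 - q⁻¹)⁻¹ = C * q * (1 - q⁻¹)⁻¹ * q ^ J := by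
              rw [zpow_add_one₀ hq0.ne']; ring
          _ ≤ C * q * (1 - q⁻¹)⁻¹ * ρ ^ s := by gcongr
          _ = C * q / (1 - q⁻¹) * ρ ^ s := by rw [div_eq_mul_inv]

lemma eventually_le_ballMass_of_le_annulusMass (hs : 0 ≤ s) {c : ℝ} (hc : 0 ≤ c)
    {jk : ℕ → ℤ} (hjk : Tendsto jk atTop atBot) {M : ℕ} (hM : ∀ k, |jk k - jk (k + 1)| ≤ M)
    (hb : ∀ k, ENNReal.ofReal (c * (2 ^ s) ^ jk k) ≤ annulusMass μ f (jk k)) :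
    ∀ᶠ ρ in 𝓝[>] 0, ENNReal.ofReal (c / (2 ^ s) ^ (M + 2) * ρ ^ s) ≤ ballMass μ f ρ := by
  set q : ℝ := 2 ^ s
  have hq : 1 ≤ q := Real.one_le_rpow one_le_two hs
  have hq0 : 0 < q := zero_lt_one.trans_le hq
  filter_upwards [Ioo_mem_nhdsGT (zpow_pos two_pos (jk 0 + 1) : (0 : ℝ) < 2 ^ (jk 0 + 1))]
    with ρ hρ
  obtain ⟨J, hJ⟩ := exists_mem_Ico_zpow hρ.1 one_lt_two
  have hJ0 : J - 1 ≤ jk 0 := by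
    have := (zpow_lt_zpow_iff_right₀ one_lt_two).1 (hJ.1.trans_lt hρ.2)
    omega
  obtain ⟨k, hk₁, hk₂⟩ := exists_mem_Icc_of_tendsto_atBot hjk hM hJ0
  have hρs : ρ ^ s ≤ q ^ (M + 2) * q ^ jk k := calc
    ρ ^ s ≤ q ^ (J + 1) := by
      rw [Real.rpow_zpow_comm zero_le_two]
      exact Real.rpow_le_rpow hρ.1.le hJ.2.le hs
    _ = q ^ (M + 2) * q ^ (J - 1 - M) := by
      rw [← zpow_natCast, ← zpow_add₀ hq0.ne']; push_cast; ring_nf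
    _ ≤ q ^ (M + 2) * q ^ jk k := by gcongr
  calc ENNReal.ofReal (c / q ^ (M + 2) * ρ ^ s) ≤ ENNReal.ofReal (c * q ^ jk k) := by
        refine ENNReal.ofReal_le_ofReal ?_
        rw [div_mul_eq_mul_div, div_le_iff₀ (by positivity)]
        nlinarith [mul_le_mul_of_nonneg_left hρs hc]
    _ ≤ annulusMass μ f (jk k) := hb k
    _ ≤ ballMass μ f (2 ^ (jk k + 1)) := annulusMass_le_ballMass μ f _
    _ ≤ ballMass μ f ρ :=
        ballMass_mono μ f ((zpow_le_zpow_right₀ one_le_two (by omega)).trans hJ.1)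

lemma exists_annulusMass_le_of_eventually_ballMass_le (hs : 0 ≤ s) {K : ℝ} (hK : 0 < K)
    (hf : ∫⁻ x, f x ∂μ ≠ ⊤)
    (hF : ∀ᶠ ρ in 𝓝[>] 0, ballMass μ f ρ ≤ ENNReal.ofReal (K * ρ ^ s)) :
    ∃ C > 0, ∀ j : ℤ, annulusMass μ f j ≤ ENNReal.ofReal (C * (2 ^ s) ^ j) := by
  set q : ℝ := 2 ^ s
  have hq : 1 ≤ q := Real.one_le_rpow one_le_two hs
  have hq0 : 0 < q := zero_lt_one.trans_le hq
  obtain ⟨j₁, hj₁⟩ := eventually_atBot.1 (tendsto_two_zpow_atBot_nhdsGT.eventually hF)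
  set T := (∫⁻ x, f x ∂μ).toReal
  refine ⟨max (K * q) (T / q ^ j₁), lt_max_of_lt_left (by positivity), fun j => ?_⟩
  rcases lt_or_ge j j₁ with hj | hj
  · calc annulusMass μ f j ≤ ballMass μ f (2 ^ (j + 1)) := annulusMass_le_ballMass μ f j
      _ ≤ ENNReal.ofReal (K * q ^ (j + 1)) := by
          simpa only [← Real.rpow_zpow_comm zero_le_two] using hj₁ (j + 1) (by omega)
      _ ≤ ENNReal.ofReal (max (K * q) (T / q ^ j₁) * q ^ j) := by
          rw [zpow_add_one₀ hq0.ne', mul_comm (q ^ j), ← mul_assoc]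
          gcongr
          exact le_max_left _ _
  · calc annulusMass μ f j ≤ ∫⁻ x, f x ∂μ := annulusMass_le_lintegral μ f j
      _ = ENNReal.ofReal (T / q ^ j₁ * q ^ j₁) := by
          rw [div_mul_cancel₀ _ (zpow_pos hq0 _).ne', ENNReal.ofReal_toReal hf]
      _ ≤ ENNReal.ofReal (max (K * q) (T / q ^ j₁) * q ^ j) := by
          gcongr
          exact le_max_right _ _

lemma eventually_exists_le_annulusMass (hs : 0 < s) {e K : ℝ} (he : 0 < e)
    (hlow : ∀ᶠ ρ in 𝓝[>] 0, ENNReal.ofReal (e * ρ ^ s) ≤ ballMass μ f ρ)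
    (hup : ∀ᶠ ρ in 𝓝[>] 0, ballMass μ f ρ ≤ ENNReal.ofReal (K * ρ ^ s)) :
    ∃ c > 0, ∃ N : ℕ, ∀ᶠ J : ℤ in atBot,
      ∃ i ≤ N, ENNReal.ofReal (c * (2 ^ s) ^ (J - i)) ≤ annulusMass μ f (J - i) := by
  set q : ℝ := 2 ^ s
  have hq : 1 < q := Real.one_lt_rpow one_lt_two hs
  have hq0 : 0 < q := zero_lt_one.trans hq
  obtain ⟨N, hN⟩ := pow_unbounded_of_one_lt (2 * K / e) hq
  have hKN : K ≤ e / 2 * q ^ N := by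
    rw [div_lt_iff₀ he] at hN
    linarith
  refine ⟨e / 2 / (N + 1), by positivity, N, ?_⟩
  have hlowJ : ∀ᶠ J : ℤ in atBot, ENNReal.ofReal (e * q ^ J) ≤ ballMass μ f (2 ^ J) := by
    simpa only [← Real.rpow_zpow_comm zero_le_two] using
      tendsto_two_zpow_atBot_nhdsGT.eventually hlow
  have hupJ : ∀ᶠ J : ℤ in atBot,
      ballMass μ f (2 ^ (J - N)) ≤ ENNReal.ofReal (K * q ^ (J - N)) := by
    simpa only [← Real.rpow_zpow_comm zero_le_two, id, ← sub_eq_add_neg] using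
      (tendsto_atBot_add_const_right atBot (-(N : ℤ)) tendsto_id).eventually
        (tendsto_two_zpow_atBot_nhdsGT.eventually hup)
  filter_upwards [hlowJ, hupJ] with J hJlow hJup
  have htail : ballMass μ f (2 ^ (J - N)) ≤ ENNReal.ofReal (e / 2 * q ^ J) := by
    refine hJup.trans (ENNReal.ofReal_le_ofReal ?_)
    calc K * q ^ (J - N) ≤ e / 2 * q ^ N * q ^ (J - N) := by gcongr
      _ = e / 2 * q ^ J := by rw [mul_assoc, ← zpow_natCast, ← zpow_add₀ hq0.ne', add_sub_cancel]
  set window := ∑ i ∈ Finset.range (N + 1), annulusMass μ f (J - i)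
  have hwindow : ENNReal.ofReal (e / 2 * q ^ J) ≤ window := by
    refine (ENNReal.add_le_add_iff_left (ENNReal.ofReal_ne_top (r := e / 2 * q ^ J))).1 ?_
    calc ENNReal.ofReal (e / 2 * q ^ J) + ENNReal.ofReal (e / 2 * q ^ J)
        = ENNReal.ofReal (e * q ^ J) := by
          rw [← ENNReal.ofReal_add (by positivity) (by positivity)]; ring_nf
      _ ≤ ballMass μ f (2 ^ J) := hJlow
      _ ≤ ballMass μ f (2 ^ (J - N)) + window := ballMass_zpow_le_add_sum μ f J N
      _ ≤ ENNReal.ofReal (e / 2 * q ^ J) + window := by gcongr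
  have hconst : ∑ _i ∈ Finset.range (N + 1), ENNReal.ofReal (e / 2 / (N + 1) * q ^ J) =
      ENNReal.ofReal (e / 2 * q ^ J) := by
    rw [Finset.sum_const, Finset.card_range, nsmul_eq_mul, ← ENNReal.ofReal_natCast,
      ← ENNReal.ofReal_mul (by positivity)]
    congr 1
    push_cast
    field_simp
  obtain ⟨i, hi, hbi⟩ := ENNReal.exists_le_of_sum_le ⟨0, Finset.mem_range.2 N.succ_pos⟩
    (hconst.trans_le hwindow)
  refine ⟨i, Nat.lt_succ_iff.1 (Finset.mem_range.1 hi), (ENNReal.ofReal_le_ofReal ?_).trans hbi⟩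
  gcongr
  · exact hq.le
  · omega

end DyadicBounds

def WeakDyadicBound (b : ℤ → ℝ≥0∞) (s : ℝ) : Prop :=
  ∃ c C : ℝ, 0 < c ∧ 0 < C ∧ ∃ jk : ℕ → ℤ, Tendsto jk atTop atBot ∧
    (∃ M : ℕ, ∀ k, |jk k - jk (k + 1)| ≤ M) ∧
    (∀ j, b j ≤ ENNReal.ofReal (C * (2 ^ s) ^ j)) ∧
    ∀ k, ENNReal.ofReal (c * (2 ^ s) ^ jk k) ≤ b (jk k)

theorem weakDyadicBound_annulusMass_iff {E : Type*} [NormedAddCommGroup E] [MeasurableSpace E]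
    {μ : Measure E} {f : E → ℝ≥0∞} (hμ : μ {0} = 0) (hf : ∫⁻ x, f x ∂μ ≠ ⊤) {s : ℝ}
    (hs : 0 < s) :
    WeakDyadicBound (annulusMass μ f) s ↔
      (∃ e > 0, ∀ᶠ ρ in 𝓝[>] 0, ENNReal.ofReal (e * ρ ^ s) ≤ ballMass μ f ρ) ∧
        ∃ K > 0, ∀ᶠ ρ in 𝓝[>] 0, ballMass μ f ρ ≤ ENNReal.ofReal (K * ρ ^ s) := by
  constructor
  · rintro ⟨c, C, hc, hC, jk, hjk, ⟨M, hM⟩, hup, hlow⟩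
    have hq : 1 < (2 : ℝ) ^ s := Real.one_lt_rpow one_lt_two hs
    refine ⟨⟨_, by positivity, eventually_le_ballMass_of_le_annulusMass hs.le hc.le hjk hM hlow⟩,
      C * 2 ^ s / (1 - (2 ^ s)⁻¹), ?_, eventually_nhdsWithin_of_forall fun ρ hρ =>
        ballMass_le_of_annulusMass_le hμ hs hC.le hup hρ⟩
    have := sub_pos.2 (inv_lt_one_of_one_lt₀ hq)
    positivity
  · rintro ⟨⟨e, he, hlow⟩, K, hK, hup⟩
    obtain ⟨C, hC, hbound⟩ := exists_annulusMass_le_of_eventually_ballMass_le hs.le hK hf hup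
    obtain ⟨c, hc, N, hwindow⟩ := eventually_exists_le_annulusMass hs he hlow hup
    obtain ⟨jk, hjk, hgap, hjk_low⟩ := exists_seq_tendsto_atBot_of_eventually_exists_sub
      (P := fun j => ENNReal.ofReal (c * (2 ^ s) ^ j) ≤ annulusMass μ f j) hwindow
    exact ⟨c, C, hc, hC, jk, hjk, ⟨N + 1, hgap⟩, hbound, hjk_low⟩

namespace ENNReal

variable {α : Type*} {l : Filter α} {u : α → ℝ≥0∞}

lemma limsup_lt_top_iff_exists_eventually_le_ofReal :
    limsup u l < ⊤ ↔ ∃ K > 0, ∀ᶠ x in l, u x ≤ ENNReal.ofReal K := by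
  refine ⟨fun h => ?_, fun ⟨K, _, hK⟩ => (limsup_le_of_le (by isBoundedDefault) hK).trans_lt
    ofReal_lt_top⟩
  obtain ⟨K, hK, hKtop⟩ := exists_between h
  exact ⟨K.toReal, toReal_pos (ne_bot_of_gt hK) hKtop.ne,
    (eventually_lt_of_limsup_lt hK).mono fun x hx => hx.le.trans (ofReal_toReal hKtop.ne).ge⟩

lemma liminf_pos_iff_exists_eventually_ofReal_le :
    0 < liminf u l ↔ ∃ e > 0, ∀ᶠ x in l, ENNReal.ofReal e ≤ u x := by
  refine ⟨fun h => ?_, fun ⟨e, he, h⟩ =>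
    (ofReal_pos.2 he).trans_le (le_liminf_of_le (by isBoundedDefault) h)⟩
  obtain ⟨e, he, hel⟩ := exists_between h
  have he_top : e ≠ ⊤ := (hel.trans_le le_top).ne
  exact ⟨e.toReal, toReal_pos he.ne' he_top,
    (eventually_lt_of_lt_liminf hel).mono fun x hx => (ofReal_toReal he_top).trans_le hx.le⟩

end ENNReal

section RescaledMass

variable {ρ s : ℝ} {x : ℝ≥0∞}

lemma ofReal_rpow_neg_eq_inv (hρ : 0 < ρ) :
    ENNReal.ofReal (ρ ^ (-s)) = (ENNReal.ofReal (ρ ^ s))⁻¹ := by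
  rw [Real.rpow_neg hρ.le, ENNReal.ofReal_inv_of_pos (by positivity)]

lemma ofReal_rpow_neg_mul_le_ofReal_iff (hρ : 0 < ρ) {K : ℝ} :
    ENNReal.ofReal (ρ ^ (-s)) * x ≤ ENNReal.ofReal K ↔ x ≤ ENNReal.ofReal (K * ρ ^ s) := by
  have hρs : ENNReal.ofReal (ρ ^ s) ≠ 0 := (ENNReal.ofReal_pos.2 (by positivity)).ne'
  rw [ofReal_rpow_neg_eq_inv hρ, ENNReal.ofReal_mul' (by positivity), mul_comm _ x,
    ← div_eq_mul_inv, ENNReal.div_le_iff hρs ENNReal.ofReal_ne_top]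

lemma ofReal_le_ofReal_rpow_neg_mul_iff (hρ : 0 < ρ) {e : ℝ} :
    ENNReal.ofReal e ≤ ENNReal.ofReal (ρ ^ (-s)) * x ↔ ENNReal.ofReal (e * ρ ^ s) ≤ x := by
  have hρs : ENNReal.ofReal (ρ ^ s) ≠ 0 := (ENNReal.ofReal_pos.2 (by positivity)).ne'
  rw [ofReal_rpow_neg_eq_inv hρ, ENNReal.ofReal_mul' (by positivity), mul_comm _ x,
    ← div_eq_mul_inv, ENNReal.le_div_iff_mul_le (Or.inl hρs) (Or.inl ENNReal.ofReal_ne_top)]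

variable {F : ℝ → ℝ≥0∞}

lemma limsup_rpow_neg_mul_lt_top_iff :
    limsup (fun ρ => ENNReal.ofReal (ρ ^ (-s)) * F ρ) (𝓝[>] 0) < ⊤ ↔
      ∃ K > 0, ∀ᶠ ρ in 𝓝[>] 0, F ρ ≤ ENNReal.ofReal (K * ρ ^ s) := by
  refine ENNReal.limsup_lt_top_iff_exists_eventually_le_ofReal.trans
    (exists_congr fun K => and_congr_right fun _ => eventually_congr ?_)
  filter_upwards [self_mem_nhdsWithin] with ρ hρ
  exact ofReal_rpow_neg_mul_le_ofReal_iff hρ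

lemma liminf_rpow_neg_mul_pos_iff :
    0 < liminf (fun ρ => ENNReal.ofReal (ρ ^ (-s)) * F ρ) (𝓝[>] 0) ↔
      ∃ e > 0, ∀ᶠ ρ in 𝓝[>] 0, ENNReal.ofReal (e * ρ ^ s) ≤ F ρ := by
  refine ENNReal.liminf_pos_iff_exists_eventually_ofReal_le.trans
    (exists_congr fun e => and_congr_right fun _ => eventually_congr ?_)
  filter_upwards [self_mem_nhdsWithin] with ρ hρ
  exact ofReal_le_ofReal_rpow_neg_mul_iff hρ

end RescaledMass

section ACondition

variable {n : ℕ} {g : EuclideanSpace ℝ (Fin n) → ℂ}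

lemma decayFun_sub_half (σ ρ : ℝ) :
    decayFun n g (σ - n / 2) ρ =
      ENNReal.ofReal (ρ ^ (-(2 * σ))) *
        ballMass volume (fun ξ => ENNReal.ofReal (‖g ξ‖ ^ 2)) ρ := by
  rw [decayFun, ballMass]
  ring_nf

lemma ajBlock_eq_annulusMass (j : ℤ) :
    ajBlock n g j = annulusMass volume (fun ξ => ENNReal.ofReal (‖g ξ‖ ^ 2)) j ^ (1 / 2 : ℝ) := by
  simp only [ajBlock, annulusMass, dyadicAnnulus, ← Real.rpow_intCast]
  push_cast
  rfl

lemma ofReal_mul_two_rpow_sq {C : ℝ} (hC : 0 ≤ C) (σ : ℝ) (j : ℤ) :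
    ENNReal.ofReal (C * 2 ^ (σ * j)) ^ (2 : ℝ) = ENNReal.ofReal (C ^ 2 * (2 ^ (2 * σ)) ^ j) := by
  rw [ENNReal.ofReal_rpow_of_nonneg (by positivity) zero_le_two, Real.rpow_two, mul_pow,
    ← Real.rpow_mul_natCast zero_le_two, ← Real.rpow_mul_intCast zero_le_two]
  push_cast
  ring_nf

lemma ajBlock_le_ofReal_iff {C : ℝ} (hC : 0 ≤ C) (σ : ℝ) (j : ℤ) :
    ajBlock n g j ≤ ENNReal.ofReal (C * 2 ^ (σ * j)) ↔
      annulusMass volume (fun ξ => ENNReal.ofReal (‖g ξ‖ ^ 2)) j ≤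
        ENNReal.ofReal (C ^ 2 * (2 ^ (2 * σ)) ^ j) := by
  rw [ajBlock_eq_annulusMass, one_div, ENNReal.rpow_inv_le_iff two_pos,
    ofReal_mul_two_rpow_sq hC]

lemma ofReal_le_ajBlock_iff {c : ℝ} (hc : 0 ≤ c) (σ : ℝ) (j : ℤ) :
    ENNReal.ofReal (c * 2 ^ (σ * j)) ≤ ajBlock n g j ↔
      ENNReal.ofReal (c ^ 2 * (2 ^ (2 * σ)) ^ j) ≤
        annulusMass volume (fun ξ => ENNReal.ofReal (‖g ξ‖ ^ 2)) j := by
  rw [ajBlock_eq_annulusMass, one_div, ENNReal.le_rpow_inv_iff two_pos,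
    ofReal_mul_two_rpow_sq hc]

lemma weakACond_iff_weakDyadicBound (σ : ℝ) :
    WeakACond n g σ ↔
      WeakDyadicBound (annulusMass volume (fun ξ => ENNReal.ofReal (‖g ξ‖ ^ 2))) (2 * σ) := by
  constructor
  · rintro ⟨c, C, hc, hC, jk, hjk, hM, hup, hlow⟩
    exact ⟨c ^ 2, C ^ 2, by positivity, by positivity, jk, hjk, hM,
      fun j => (ajBlock_le_ofReal_iff hC.le σ j).1 (hup j),
      fun k => (ofReal_le_ajBlock_iff hc.le σ (jk k)).1 (hlow k)⟩
  · rintro ⟨c, C, hc, hC, jk, hjk, hM, hup, hlow⟩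
    refine ⟨√c, √C, by positivity, by positivity, jk, hjk, hM,
      fun j => (ajBlock_le_ofReal_iff (Real.sqrt_nonneg C) σ j).2 ?_,
      fun k => (ofReal_le_ajBlock_iff (Real.sqrt_nonneg c) σ (jk k)).2 ?_⟩
    · rw [Real.sq_sqrt hC.le]
      exact hup j
    · rw [Real.sq_sqrt hc.le]
      exact hlow k

end ACondition

theorem stmt16_general (n : ℕ) (hn : 1 ≤ n) (g : EuclideanSpace ℝ (Fin n) → ℂ)
    (hg : MemLp g 2 (volume : Measure (EuclideanSpace ℝ (Fin n))))
    (σstar : ℝ) (hσ : 0 < σstar) :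
    WeakACond n g σstar ↔
      (0 < Pminus n g (σstar - (n : ℝ) / 2) ∧ Pplus n g (σstar - (n : ℝ) / 2) < ⊤) := by
  have : Nonempty (Fin n) := ⟨⟨0, hn⟩⟩
  have hL2 : ∫⁻ ξ, ENNReal.ofReal (‖g ξ‖ ^ 2) ≠ ⊤ :=
    ((memLp_two_iff_integrable_sq_norm hg.1).1 hg).lintegral_lt_top.ne
  simp only [Pminus, Pplus, decayFun_sub_half]
  rw [weakACond_iff_weakDyadicBound, liminf_rpow_neg_mul_pos_iff, limsup_rpow_neg_mul_lt_top_iff]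
  exact weakDyadicBound_annulusMass_iff (measure_singleton 0) hL2 (by positivity)

theorem stmt16 (n : ℕ) (hn : 1 ≤ n) (g : EuclideanSpace ℝ (Fin n) → ℂ)
    (hg_meas : Measurable g) (hg : MemLp g 2 (volume : Measure (EuclideanSpace ℝ (Fin n))))
    (σstar : ℝ) (hσ : 0 < σstar) :
    WeakACond n g σstar ↔
      (0 < Pminus n g (σstar - (n : ℝ) / 2) ∧ Pplus n g (σstar - (n : ℝ) / 2) < ⊤) :=
  stmt16_general n hn g hg σstar hσ
end
end

section
/- For every n ≥ 1 and every r ∈ (−n/2, ∞), there exists a measurable g ∈ L²(ℝⁿ) such that 0 < P_r(g)₋ < P_r(g)₊ < ∞; indeed one may choose g (for example, g(ξ) = |ξ|^r on the union of the dyadic annuli {2^{2j−1} ≤ |ξ| ≤ 2^{2j}}, j ≤ 0, and g = 0 elsewhere) so that P_r(g)₋ = 2^{−(2r+n)} P_r(g)₊. In particular, for such g the limit lim_{ρ→0⁺} ρ^{−(2r+n)} ∫_{|ξ|≤ρ} |g(ξ)|² dξ does not exist, although the decay character of g exists (in the relaxed sense 0 < P_r(g)₋ ≤ P_r(g)₊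 < ∞) and equals r. -/
open MeasureTheory Filter Topology
open scoped ENNReal NNReal

noncomputable section

/-!
Write `α = 2r + n > 0` and `b = 2^{-α}`, and let `g(ξ) = |ξ|^r` on the annuli
`2^{-(2k+1)} < |ξ| ≤ 2^{-2k}`. In polar coordinates the substitution `x = |ξ|^α` turns
`|ξ|^{2r} dξ` into a constant multiple of `dx`, and the annuli into the intervals
`T = ⋃ₖ (b^{2k+1}, b^{2k}]`. Hence `ρ^{-α} ∫_{|ξ|≤ρ} |g|²` is, up to that constant, the density
`|T ∩ (0, x]| / x` at `x = ρ^α`. A geometric series gives `|T ∩ (0, b^{2k}]| = b^{2k}/(1+b)`, and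
from this the density oscillates between `b/(1+b)`, attained at `x = b^{2k+1}`, and `1/(1+b)`,
attained at `x = b^{2k}`.
-/

open Set Metric

namespace Filter

variable {α β : Type*} [CompleteLattice β] {f : α → β} {l : Filter α} {b : β}

theorem limsup_eq_of_eventually_le_of_frequently_eq (hle : ∀ᶠ x in l, f x ≤ b)
    (heq : ∃ᶠ x in l, f x = b) : limsup f l = b :=
  le_antisymm (limsup_le_of_le (by isBoundedDefault) hle)
    (le_limsup_of_frequently_le (heq.mono fun _ h => h.ge) (by isBoundedDefault))

theorem liminf_eq_of_eventually_ge_of_frequently_eq (hge : ∀ᶠ x in l, b ≤ f x)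
    (heq : ∃ᶠ x in l, f x = b) : liminf f l = b :=
  le_antisymm (liminf_le_of_frequently_le (heq.mono fun _ h => h.le) (by isBoundedDefault))
    (le_liminf_of_le (by isBoundedDefault) hge)

end Filter

namespace Real

theorem tendsto_rpow_nhdsGT_zero {p : ℝ} (hp : 0 < p) :
    Tendsto (fun x : ℝ => x ^ p) (𝓝[>] 0) (𝓝[>] 0) := by
  refine tendsto_nhdsWithin_iff.2
    ⟨?_, eventually_nhdsWithin_of_forall fun x hx => rpow_pos_of_pos hx p⟩
  simpa [zero_rpow hp.ne'] using
    (continuousAt_rpow_const 0 p (.inr hp.le)).tendsto.mono_left nhdsWithin_le_nhds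

theorem map_rpow_nhdsGT_zero {p : ℝ} (hp : 0 < p) :
    map (fun x : ℝ => x ^ p) (𝓝[>] 0) = 𝓝[>] 0 := by
  refine le_antisymm (tendsto_rpow_nhdsGT_zero hp) ?_
  have hinv : (fun x : ℝ => (x ^ p⁻¹) ^ p) =ᶠ[𝓝[>] 0] id :=
    eventually_nhdsWithin_of_forall fun x hx => rpow_inv_rpow (le_of_lt hx) hp.ne'
  calc 𝓝[>] (0 : ℝ) = map (fun x => (x ^ p⁻¹) ^ p) (𝓝[>] 0) := by rw [map_congr hinv, map_id]
    _ = map (fun x => x ^ p) (map (fun x => x ^ p⁻¹) (𝓝[>] 0)) := by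
        rw [map_map]; rfl
    _ ≤ map (fun x => x ^ p) (𝓝[>] 0) := map_mono (tendsto_rpow_nhdsGT_zero (inv_pos.2 hp))

end Real

theorem tendsto_pow_nhdsGT_zero {b : ℝ} (hb0 : 0 < b) (hb1 : b < 1) {j : ℕ → ℕ}
    (hj : Tendsto j atTop atTop) : Tendsto (fun k => b ^ j k) atTop (𝓝[>] 0) :=
  tendsto_nhdsWithin_iff.2 ⟨(tendsto_pow_atTop_nhds_zero_of_lt_one hb0.le hb1).comp hj,
    .of_forall fun _ => pow_pos hb0 _⟩

namespace MeasureTheory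

theorem lintegral_comp_rpow_Ioi {p : ℝ} (hp : 0 < p) (f : ℝ → ℝ≥0∞) :
    ∫⁻ y in Ioi 0, ENNReal.ofReal (p * y ^ (p - 1)) * f (y ^ p) = ∫⁻ x in Ioi 0, f x := by
  have himage : (fun y : ℝ => y ^ p) '' Ioi 0 = Ioi 0 :=
    Subset.antisymm (image_subset_iff.2 fun y hy => Real.rpow_pos_of_pos hy p) fun x hx =>
      ⟨x ^ p⁻¹, Real.rpow_pos_of_pos hx _, Real.rpow_inv_rpow (le_of_lt hx) hp.ne'⟩
  have := lintegral_image_eq_lintegral_abs_deriv_mul measurableSet_Ioi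
    (fun y hy => (Real.hasDerivAt_rpow_const (.inl (ne_of_gt hy))).hasDerivWithinAt)
    ((Real.strictMonoOn_rpow_Ici_of_exponent_pos hp).injOn.mono Ioi_subset_Ici_self) f
  rw [himage] at this
  rw [this]
  refine setLIntegral_congr_fun measurableSet_Ioi fun y (hy : 0 < y) => ?_
  rw [abs_of_pos (by positivity)]

variable {E : Type*} [NormedAddCommGroup E] [NormedSpace ℝ E] [Nontrivial E]
  [FiniteDimensional ℝ E] [MeasurableSpace E] [BorelSpace E] (μ : Measure E) [μ.IsAddHaarMeasure]

theorem lintegral_fun_norm_addHaar {f : ℝ → ℝ≥0∞} (hf : Measurable f) :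
    ∫⁻ x, f ‖x‖ ∂μ = Module.finrank ℝ E * μ (ball 0 1) *
      ∫⁻ y in Ioi (0 : ℝ), ENNReal.ofReal (y ^ (Module.finrank ℝ E - 1)) * f y := by
  calc ∫⁻ x, f ‖x‖ ∂μ = ∫⁻ x : ({(0)}ᶜ : Set E), f ‖x.1‖ ∂(μ.comap (↑)) := by
        rw [lintegral_subtype_comap (measurableSet_singleton _).compl fun x ↦ f ‖x‖,
          restrict_compl_singleton]
    _ = ∫⁻ x, f x.2 ∂μ.toSphere.prod (.volumeIoiPow (Module.finrank ℝ E - 1)) := by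
        simpa using μ.measurePreserving_homeomorphUnitSphereProd.lintegral_comp_emb
          (Homeomorph.measurableEmbedding _) (f ∘ Subtype.val ∘ Prod.snd)
    _ = μ.toSphere univ * ∫⁻ y, f y ∂.volumeIoiPow (Module.finrank ℝ E - 1) := by
        rw [lintegral_prod _ (by fun_prop)]
        simp [mul_comm]
    _ = _ := by
        rw [μ.toSphere_apply_univ, Measure.volumeIoiPow,
          lintegral_withDensity_eq_lintegral_mul _ (by fun_prop) (by fun_prop),
          ← lintegral_subtype_comap measurableSet_Ioi]
        rfl

theorem setLIntegral_preimage_norm_rpow {s : ℝ} (hs : 0 < s + Module.finrank ℝ E) {U : Set ℝ}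
    (hU : MeasurableSet U) :
    ∫⁻ x in (fun x : E => ‖x‖ ^ (s + Module.finrank ℝ E)) ⁻¹' U, ENNReal.ofReal (‖x‖ ^ s) ∂μ =
      Module.finrank ℝ E * μ (ball 0 1) * ENNReal.ofReal (s + Module.finrank ℝ E)⁻¹ *
        volume (U ∩ Ioi 0) := by
  set d := Module.finrank ℝ E
  set α := s + d
  set V := (fun t : ℝ => t ^ α) ⁻¹' U
  have hV : MeasurableSet V := measurable_id.pow_const α hU
  have hd : ((d - 1 : ℕ) : ℝ) = d - 1 := Nat.cast_pred Module.finrank_pos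
  have hweight : ∀ y ∈ Ioi (0 : ℝ),
      ENNReal.ofReal (y ^ (d - 1)) * V.indicator (fun t => ENNReal.ofReal (t ^ s)) y =
        ENNReal.ofReal α⁻¹ * (ENNReal.ofReal (α * y ^ (α - 1)) * U.indicator 1 (y ^ α)) := by
    intro y (hy : 0 < y)
    by_cases hyU : y ^ α ∈ U
    · rw [indicator_of_mem (show y ∈ V from hyU), indicator_of_mem hyU, Pi.one_apply, mul_one,
        ← ENNReal.ofReal_mul (by positivity), ← ENNReal.ofReal_mul (by positivity),
        inv_mul_cancel_left₀ hs.ne', ← Real.rpow_natCast, hd, ← Real.rpow_add hy]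
      congr 2
      ring
    · simp [indicator_of_notMem (show y ∉ V from hyU), indicator_of_notMem hyU]
  calc ∫⁻ x in (fun x : E => ‖x‖ ^ α) ⁻¹' U, ENNReal.ofReal (‖x‖ ^ s) ∂μ
      = ∫⁻ x, V.indicator (fun t => ENNReal.ofReal (t ^ s)) ‖x‖ ∂μ :=
        (lintegral_indicator (measurable_norm hV) _).symm
    _ = d * μ (ball 0 1) * ∫⁻ y in Ioi 0,
          ENNReal.ofReal α⁻¹ * (ENNReal.ofReal (α * y ^ (α - 1)) * U.indicator 1 (y ^ α)) := by
        rw [lintegral_fun_norm_addHaar μ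
            ((by fun_prop : Measurable fun t : ℝ => ENNReal.ofReal (t ^ s)).indicator hV),
          setLIntegral_congr_fun measurableSet_Ioi hweight]
    _ = _ := by
        rw [lintegral_const_mul' _ _ ENNReal.ofReal_ne_top, lintegral_comp_rpow_Ioi hs,
          lintegral_indicator_one hU, Measure.restrict_apply hU]
        simp only [mul_assoc]

end MeasureTheory

def dyadicShells (b : ℝ) : Set ℝ := ⋃ k : ℕ, Ioc (b ^ (2 * k + 1)) (b ^ (2 * k))

namespace dyadicShells

variable {b : ℝ}

theorem measurableSet : MeasurableSet (dyadicShells b) :=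
  .iUnion fun _ => measurableSet_Ioc

theorem subset_Ioc (hb0 : 0 < b) (hb1 : b ≤ 1) : dyadicShells b ⊆ Ioc 0 1 :=
  iUnion_subset fun _ _ hx => ⟨(pow_pos hb0 _).trans hx.1, hx.2.trans (pow_le_one₀ hb0.le hb1)⟩

theorem rpow_mem_rpow_iff {t p : ℝ} (ht : 0 ≤ t) (hb : 0 ≤ b) (hp : 0 < p) :
    t ^ p ∈ dyadicShells (b ^ p) ↔ t ∈ dyadicShells b := by
  simp only [dyadicShells, mem_iUnion, mem_Ioc, Real.rpow_pow_comm hb,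
    Real.rpow_lt_rpow_iff (pow_nonneg hb _) ht hp, Real.rpow_le_rpow_iff ht (pow_nonneg hb _) hp]

theorem pairwise_disjoint (hb0 : 0 ≤ b) (hb1 : b ≤ 1) :
    Pairwise (Function.onFun Disjoint fun k : ℕ => Ioc (b ^ (2 * k + 1)) (b ^ (2 * k))) := by
  refine (pairwise_disjoint_on _).2 fun i j hij => disjoint_left.2 fun x hi hj => ?_
  have : b ^ (2 * j) ≤ b ^ (2 * i + 1) := pow_le_pow_of_le_one hb0 hb1 (by omega)
  exact hi.1.not_ge (hj.2.trans this)

theorem volume_inter_Iic_pow_even (hb0 : 0 < b) (hb1 : b < 1) (k : ℕ) :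
    volume (dyadicShells b ∩ Iic (b ^ (2 * k))) = ENNReal.ofReal (b ^ (2 * k) / (1 + b)) := by
  have hset : dyadicShells b ∩ Iic (b ^ (2 * k)) =
      ⋃ j : ℕ, Ioc (b ^ (2 * (k + j) + 1)) (b ^ (2 * (k + j))) := by
    ext x
    simp only [dyadicShells, iUnion_inter, mem_iUnion, mem_inter_iff, mem_Ioc, mem_Iic]
    constructor
    · rintro ⟨i, hx, hxk⟩
      have hki : k ≤ i := by
        by_contra! hik
        exact hx.1.not_ge (hxk.trans (pow_le_pow_of_le_one hb0.le hb1.le (by omega)))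
      exact ⟨i - k, by rwa [Nat.add_sub_cancel' hki]⟩
    · rintro ⟨j, hx⟩
      exact ⟨k + j, hx, hx.2.trans (pow_le_pow_of_le_one hb0.le hb1.le (by omega))⟩
  have hterm : ∀ j : ℕ, b ^ (2 * (k + j)) - b ^ (2 * (k + j) + 1) =
      b ^ (2 * k) * (1 - b) * (b ^ 2) ^ j := fun j => by ring
  have hgeom : Summable fun j : ℕ => b ^ (2 * k) * (1 - b) * (b ^ 2) ^ j :=
    (summable_geometric_of_lt_one (by positivity) (by nlinarith)).mul_left _
  rw [hset, measure_iUnion ((pairwise_disjoint hb0.le hb1.le).comp_of_injective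
      (add_right_injective k)) fun _ => measurableSet_Ioc]
  simp_rw [Real.volume_Ioc, hterm]
  rw [← ENNReal.ofReal_tsum_of_nonneg (fun j => by have := hb1; positivity) hgeom, tsum_mul_left,
    tsum_geometric_of_lt_one (by positivity) (by nlinarith)]
  have : 1 - b ^ 2 ≠ 0 := by nlinarith
  congr 1
  field_simp
  ring

theorem volume_inter_Iic (hb0 : 0 < b) (hb1 : b < 1) {k : ℕ} {x : ℝ}
    (hx1 : b ^ (2 * k + 2) ≤ x) (hx2 : x ≤ b ^ (2 * k)) :
    volume (dyadicShells b ∩ Iic x) =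
      ENNReal.ofReal (b ^ (2 * k + 2) / (1 + b)) + ENNReal.ofReal (x - b ^ (2 * k + 1)) := by
  have hanti : ∀ {i j : ℕ}, i ≤ j → b ^ j ≤ b ^ i := pow_le_pow_of_le_one hb0.le hb1.le
  have hset : dyadicShells b ∩ Iic x =
      (dyadicShells b ∩ Iic (b ^ (2 * (k + 1)))) ∪ Ioc (b ^ (2 * k + 1)) x := by
    ext y
    simp only [mem_union, mem_inter_iff, mem_Iic, mem_Ioc]
    constructor
    · rintro ⟨hyT, hyx⟩
      obtain ⟨i, hyi⟩ := mem_iUnion.1 hyT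
      rcases le_or_gt (k + 1) i with hki | hik
      · exact .inl ⟨hyT, hyi.2.trans (hanti (by omega))⟩
      · exact .inr ⟨(hanti (by omega)).trans_lt hyi.1, hyx⟩
    · rintro (⟨hyT, hyk⟩ | ⟨hy1, hy2⟩)
      · exact ⟨hyT, hyk.trans hx1⟩
      · exact ⟨mem_iUnion.2 ⟨k, hy1, hy2.trans hx2⟩, hy2⟩
  have hdisj : Disjoint (dyadicShells b ∩ Iic (b ^ (2 * (k + 1)))) (Ioc (b ^ (2 * k + 1)) x) :=
    disjoint_left.2 fun y hy hy' => hy'.1.not_ge (hy.2.trans (hanti (by omega)))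
  rw [hset, measure_union hdisj measurableSet_Ioc, volume_inter_Iic_pow_even hb0 hb1,
    Real.volume_Ioc]
  ring_nf

def density (b x : ℝ) : ℝ≥0∞ := ENNReal.ofReal x⁻¹ * volume (dyadicShells b ∩ Iic x)

theorem density_pow_even (hb0 : 0 < b) (hb1 : b < 1) (k : ℕ) :
    density b (b ^ (2 * k)) = ENNReal.ofReal (1 + b)⁻¹ := by
  rw [density, volume_inter_Iic_pow_even hb0 hb1, ← ENNReal.ofReal_mul (by positivity)]
  congr 1
  field_simp

theorem density_pow_odd (hb0 : 0 < b) (hb1 : b < 1) (k : ℕ) :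
    density b (b ^ (2 * k + 1)) = ENNReal.ofReal (b / (1 + b)) := by
  have hk : b ^ (2 * k + 2) = b ^ (2 * k + 1) * b := pow_succ _ _
  have hlow : b ^ (2 * k + 2) ≤ b ^ (2 * k + 1) := pow_le_pow_of_le_one hb0.le hb1.le (by omega)
  have hupp : b ^ (2 * k + 1) ≤ b ^ (2 * k) := pow_le_pow_of_le_one hb0.le hb1.le (by omega)
  rw [density, volume_inter_Iic hb0 hb1 hlow hupp, sub_self, ENNReal.ofReal_zero, add_zero,
    ← ENNReal.ofReal_mul (by positivity), hk]
  congr 1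
  field_simp

theorem density_mem_Icc (hb0 : 0 < b) (hb1 : b < 1) {x : ℝ} (hx0 : 0 < x) (hx1 : x ≤ 1) :
    density b x ∈ Icc (ENNReal.ofReal (b / (1 + b))) (ENNReal.ofReal (1 + b)⁻¹) := by
  obtain ⟨k, hk1, hk2⟩ := exists_nat_pow_near_of_lt_one hx0 hx1 (pow_pos hb0 2) (by nlinarith)
  rw [← pow_mul] at hk1 hk2
  rw [mul_add, mul_one] at hk1
  set y := b ^ (2 * k + 1)
  have hby : b ^ (2 * k + 2) = b * y := by rw [pow_succ]; ring
  have hxy : b * x ≤ y := by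
    have : y = b ^ (2 * k) * b := pow_succ _ _
    nlinarith
  have hmax : ENNReal.ofReal (x - y) = ENNReal.ofReal (max (x - y) 0) := by simp
  rw [density, volume_inter_Iic hb0 hb1 hk1.le hk2, hby, hmax,
    ← ENNReal.ofReal_add (by positivity) (le_max_right _ _), ← ENNReal.ofReal_mul (by positivity)]
  refine ⟨ENNReal.ofReal_le_ofReal ?_, ENNReal.ofReal_le_ofReal ?_⟩
  · rw [le_inv_mul_iff₀ hx0]
    field_simp
    nlinarith [le_max_left (x - y) 0, le_max_right (x - y) 0]
  · rw [inv_mul_le_iff₀ hx0]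
    field_simp
    rcases max_cases (x - y) 0 with ⟨hm, -⟩ | ⟨hm, -⟩ <;> rw [hm] <;> nlinarith

theorem limsup_density (hb0 : 0 < b) (hb1 : b < 1) :
    limsup (density b) (𝓝[>] 0) = ENNReal.ofReal (1 + b)⁻¹ := by
  refine limsup_eq_of_eventually_le_of_frequently_eq ?_ ?_
  · filter_upwards [Ioc_mem_nhdsGT one_pos] with x hx
    exact (density_mem_Icc hb0 hb1 hx.1 hx.2).2
  · exact (tendsto_pow_nhdsGT_zero hb0 hb1 (j := (2 * ·))
      (tendsto_atTop_mono (fun k => show k ≤ 2 * k by omega) tendsto_id)).frequently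
      (.of_forall (density_pow_even hb0 hb1))

theorem liminf_density (hb0 : 0 < b) (hb1 : b < 1) :
    liminf (density b) (𝓝[>] 0) = ENNReal.ofReal (b / (1 + b)) := by
  refine liminf_eq_of_eventually_ge_of_frequently_eq ?_ ?_
  · filter_upwards [Ioc_mem_nhdsGT one_pos] with x hx
    exact (density_mem_Icc hb0 hb1 hx.1 hx.2).1
  · exact (tendsto_pow_nhdsGT_zero hb0 hb1 (j := (2 * · + 1))
      (tendsto_atTop_mono (fun k => show k ≤ 2 * k + 1 by omega) tendsto_id)).frequently
      (.of_forall (density_pow_odd hb0 hb1))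

theorem limsup_density_rpow (hb0 : 0 < b) (hb1 : b < 1) {p : ℝ} (hp : 0 < p) :
    limsup (fun x : ℝ => density b (x ^ p)) (𝓝[>] 0) = ENNReal.ofReal (1 + b)⁻¹ := by
  rw [← limsup_density hb0 hb1]
  conv_rhs => rw [← Real.map_rpow_nhdsGT_zero hp]
  rfl

theorem liminf_density_rpow (hb0 : 0 < b) (hb1 : b < 1) {p : ℝ} (hp : 0 < p) :
    liminf (fun x : ℝ => density b (x ^ p)) (𝓝[>] 0) = ENNReal.ofReal (b / (1 + b)) := by
  rw [← liminf_density hb0 hb1]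
  conv_rhs => rw [← Real.map_rpow_nhdsGT_zero hp]
  rfl

end dyadicShells

def shellProfile {E : Type*} [NormedAddCommGroup E] (r : ℝ) (x : E) : ℂ :=
  ((dyadicShells 2⁻¹).indicator (fun t => t ^ r) ‖x‖ : ℝ)

section shellProfile

variable {E : Type*} [NormedAddCommGroup E] {r : ℝ}

theorem measurable_shellProfile [MeasurableSpace E] [OpensMeasurableSpace E] :
    Measurable (shellProfile r : E → ℂ) :=
  Complex.measurable_ofReal.comp
    (((measurable_id.pow_const r).indicator dyadicShells.measurableSet).comp measurable_norm)

theorem ofReal_norm_shellProfile_sq {α : ℝ} (hα : 0 < α) (x : E) :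
    ENNReal.ofReal (‖shellProfile r x‖ ^ 2) =
      ((fun x : E => ‖x‖ ^ α) ⁻¹' dyadicShells (2 ^ (-α))).indicator
        (fun x => ENNReal.ofReal (‖x‖ ^ (2 * r))) x := by
  set P := (fun x : E => ‖x‖ ^ α) ⁻¹' dyadicShells (2 ^ (-α))
  have hmem : x ∈ P ↔ ‖x‖ ∈ dyadicShells 2⁻¹ := by
    rw [mem_preimage, Real.rpow_neg zero_le_two, ← Real.inv_rpow zero_le_two]
    exact dyadicShells.rpow_mem_rpow_iff (norm_nonneg x) (by norm_num) hα
  by_cases hx : ‖x‖ ∈ dyadicShells 2⁻¹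
  · rw [indicator_of_mem (hmem.2 hx), shellProfile, indicator_of_mem hx, Complex.norm_real,
      Real.norm_eq_abs, sq_abs, ← Real.rpow_natCast, ← Real.rpow_mul (norm_nonneg x),
      Nat.cast_two, mul_comm]
  · simp [shellProfile, hx, indicator_of_notMem (mt hmem.1 hx)]

variable [NormedSpace ℝ E] [Nontrivial E] [FiniteDimensional ℝ E] [MeasurableSpace E]
  [BorelSpace E] (μ : Measure E) [μ.IsAddHaarMeasure]

theorem setLIntegral_preimage_norm_rpow_shellProfile (hα : 0 < 2 * r + Module.finrank ℝ E)
    {U : Set ℝ} (hU : MeasurableSet U) :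
    ∫⁻ x in (fun x : E => ‖x‖ ^ (2 * r + Module.finrank ℝ E)) ⁻¹' U,
        ENNReal.ofReal (‖shellProfile r x‖ ^ 2) ∂μ =
      Module.finrank ℝ E * μ (ball 0 1) * ENNReal.ofReal (2 * r + Module.finrank ℝ E)⁻¹ *
        volume (dyadicShells (2 ^ (-(2 * r + Module.finrank ℝ E))) ∩ U) := by
  set α := 2 * r + (Module.finrank ℝ E : ℝ)
  have hT : MeasurableSet ((fun x : E => ‖x‖ ^ α) ⁻¹' dyadicShells (2 ^ (-α))) :=
    (measurable_norm.pow_const α) dyadicShells.measurableSet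
  have hpos : dyadicShells (2 ^ (-α)) ∩ U ⊆ Ioi 0 :=
    inter_subset_left.trans ((dyadicShells.subset_Ioc (by positivity)
      (Real.rpow_le_one_of_one_le_of_nonpos one_le_two (neg_nonpos.2 hα.le))).trans
        Ioc_subset_Ioi_self)
  simp_rw [ofReal_norm_shellProfile_sq hα]
  rw [lintegral_indicator hT, Measure.restrict_restrict hT, ← preimage_inter,
    setLIntegral_preimage_norm_rpow μ hα (dyadicShells.measurableSet.inter hU),
    inter_eq_left.2 hpos]

theorem memLp_shellProfile (hα : 0 < 2 * r + Module.finrank ℝ E) :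
    MemLp (shellProfile r : E → ℂ) 2 μ := by
  rw [memLp_two_iff_integrable_sq_norm measurable_shellProfile.aestronglyMeasurable]
  refine ⟨(measurable_shellProfile.norm.pow_const 2).aestronglyMeasurable, ?_⟩
  have hvol : volume (dyadicShells (2 ^ (-(2 * r + Module.finrank ℝ E))) ∩ univ) < ⊤ :=
    (measure_mono (inter_subset_left.trans (dyadicShells.subset_Ioc (by positivity)
      (Real.rpow_le_one_of_one_le_of_nonpos one_le_two (neg_nonpos.2 hα.le))))).trans_lt
        (by simp)
  have := setLIntegral_preimage_norm_rpow_shellProfile μ hα MeasurableSet.univ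
  rw [preimage_univ, Measure.restrict_univ] at this
  rw [hasFiniteIntegral_iff_ofReal (.of_forall fun _ => by positivity), this]
  exact ENNReal.mul_lt_top (by finiteness) hvol

end shellProfile

theorem decayFun_shellProfile {n : ℕ} [NeZero n] {r ρ : ℝ} (hα : 0 < 2 * r + n) (hρ : 0 < ρ) :
    decayFun n (shellProfile r) r ρ =
      n * volume (ball (0 : EuclideanSpace ℝ (Fin n)) 1) * ENNReal.ofReal (2 * r + n)⁻¹ *
        dyadicShells.density (2 ^ (-(2 * r + n))) (ρ ^ (2 * r + n)) := by
  have hball : {ξ : EuclideanSpace ℝ (Fin n) | ‖ξ‖ ≤ ρ} =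
      (fun ξ => ‖ξ‖ ^ (2 * r + n)) ⁻¹' Iic (ρ ^ (2 * r + n)) := by
    ext ξ
    exact (Real.rpow_le_rpow_iff (norm_nonneg ξ) hρ.le hα).symm
  have := setLIntegral_preimage_norm_rpow_shellProfile (E := EuclideanSpace ℝ (Fin n)) (r := r)
    volume (by simpa using hα) (measurableSet_Iic (a := ρ ^ (2 * r + n)))
  rw [finrank_euclideanSpace_fin] at this
  rw [decayFun, hball, this, dyadicShells.density, Real.rpow_neg hρ.le]
  ring

theorem stmt17 (n : ℕ) (hn : 1 ≤ n) (r : ℝ) (hlow : -(n : ℝ) / 2 < r) :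
    ∃ g : EuclideanSpace ℝ (Fin n) → ℂ, Measurable g ∧
      MemLp g 2 (volume : Measure (EuclideanSpace ℝ (Fin n))) ∧
      0 < Pminus n g r ∧ Pminus n g r < Pplus n g r ∧ Pplus n g r < ⊤ ∧
      Pminus n g r = ENNReal.ofReal ((2 : ℝ) ^ (-(2 * r + (n : ℝ)))) * Pplus n g r ∧
      ¬ ∃ L : ℝ≥0∞, Tendsto (fun ρ : ℝ => decayFun n g r ρ) (𝓝[>] (0 : ℝ)) (𝓝 L) := by
  have : NeZero n := ⟨by omega⟩
  set α := 2 * r + (n : ℝ)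
  have hα : 0 < α := by linarith
  set b : ℝ := 2 ^ (-α)
  have hb0 : 0 < b := by positivity
  have hb1 : b < 1 := Real.rpow_lt_one_of_one_lt_of_neg one_lt_two (neg_lt_zero.2 hα)
  set C : ℝ≥0∞ := n * volume (ball (0 : EuclideanSpace ℝ (Fin n)) 1) * ENNReal.ofReal α⁻¹
  have hC0 : C ≠ 0 := by simp [C, hα, NeZero.ne n, (measure_ball_pos volume _ one_pos).ne']
  have hCtop : C ≠ ⊤ := by finiteness
  have hD : (fun ρ => decayFun n (shellProfile r) r ρ) =ᶠ[𝓝[>] 0]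
      fun ρ => C * dyadicShells.density b (ρ ^ α) :=
    eventually_nhdsWithin_of_forall fun ρ hρ => decayFun_shellProfile hα hρ
  have hPplus : Pplus n (shellProfile r) r = C * ENNReal.ofReal (1 + b)⁻¹ := by
    rw [Pplus, limsup_congr hD, ENNReal.limsup_const_mul_of_ne_top hCtop,
      dyadicShells.limsup_density_rpow hb0 hb1 hα]
  have hPminus : Pminus n (shellProfile r) r = C * ENNReal.ofReal (b / (1 + b)) := by
    rw [Pminus, liminf_congr hD, ENNReal.liminf_const_mul_of_ne_top hCtop,
      dyadicShells.liminf_density_rpow hb0 hb1 hα]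
  have hlt : Pminus n (shellProfile r) r < Pplus n (shellProfile r) r := by
    rw [hPminus, hPplus, ENNReal.mul_lt_mul_iff_right hC0 hCtop,
      ENNReal.ofReal_lt_ofReal_iff (by positivity), div_eq_mul_inv]
    exact mul_lt_of_lt_one_left (by positivity) hb1
  refine ⟨shellProfile r, measurable_shellProfile, memLp_shellProfile volume (by simpa using hα),
    ?_, hlt, ?_, ?_, ?_⟩
  · rw [hPminus]
    exact ENNReal.mul_pos hC0 (ENNReal.ofReal_pos.2 (by positivity)).ne'
  · rw [hPplus]
    exact ENNReal.mul_lt_top hCtop.lt_top ENNReal.ofReal_lt_top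
  · rw [hPminus, hPplus, mul_left_comm, ← ENNReal.ofReal_mul hb0.le, div_eq_mul_inv]
  · rintro ⟨L, hL⟩
    exact hlt.ne (hL.liminf_eq.trans hL.limsup_eq.symm)
end
end
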